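/- arXiv:1807.07527 — 6 statements merged into one kernel-verified Lean document; each statement's English description precedes it below -/
import Mathlib

section
/- Let d ≥ 1 be an integer, w > 0, and 0 < r with 2r ≤ 3w, and fix x ∈ ℝ^d. If an offset v is sampled uniformly from the cube [0, 3w]^d, then the probability that there exists u ∈ v + 3w·ℤ^d with ‖x − u‖₂ ≤ r is exactly V_d · (r/(3w))^d. -/
/-! With `N = 3w`, the event is that `v` lies in the closed cube `[0, N]^d` and in one of the
translates `x - N k + B(0, r)`. The half-open cube is a fundamental domain of the lattice `N ℤ^d`
and differs from the closed one by a null set, and since `2r ≤ N` distinct translates of the ball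
meet only inside null spheres. Folding the translates back into the fundamental domain therefore
gives exactly the volume of one ball, `V_d r^d`. -/

open MeasureTheory

noncomputable def unitBallVol (d : ℕ) : ℝ :=
  (volume {z : Fin d → ℝ | Real.sqrt (∑ i, (z i) ^ 2) ≤ 1}).toReal

open Metric Module Submodule Pointwise Set WithLp

theorem MeasureTheory.IsAddFundamentalDomain.measure_inter_iUnion_vadd {G α : Type*} [AddGroup G]
    [Countable G] [MeasurableSpace α] [AddAction G α] [MeasurableConstVAdd G α] {μ : Measure α}
    [VAddInvariantMeasure G α μ] {s t : Set α} (hs : IsAddFundamentalDomain G s μ)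
    (ht : NullMeasurableSet t μ)
    (hdisj : Pairwise (Function.onFun (AEDisjoint μ) fun g : G ↦ g +ᵥ t)) :
    μ (s ∩ ⋃ g : G, g +ᵥ t) = μ t := by
  rw [hs.measure_eq_tsum t, inter_iUnion, measure_iUnion₀
    (fun g g' hgg' ↦ (hdisj hgg').mono inter_subset_right inter_subset_right)
    (fun g ↦ hs.nullMeasurableSet.inter (ht.vadd g))]
  simp only [inter_comm]

theorem MeasureTheory.Measure.aedisjoint_closedBall_of_two_mul_le_dist {E : Type*}
    [NormedAddCommGroup E] [NormedSpace ℝ E] [MeasurableSpace E] [BorelSpace E]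
    [FiniteDimensional ℝ E] [Nontrivial E] (μ : Measure E) [μ.IsAddHaarMeasure]
    {x y : E} {r : ℝ}
    (h : 2 * r ≤ dist x y) : AEDisjoint μ (closedBall x r) (closedBall y r) := by
  refine measure_mono_null (fun z ⟨hzx, hzy⟩ ↦ ?_) (Measure.addHaar_sphere μ x r)
  rw [mem_closedBall] at hzx hzy
  rw [mem_sphere]
  linarith [dist_triangle_left x y z]

namespace EuclideanSpace

variable (ι : Type*) [Fintype ι] {N : ℝ}

noncomputable def scaledBasisFun (hN : N ≠ 0) : Basis ι ℝ (EuclideanSpace ℝ ι) :=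
  (EuclideanSpace.basisFun ι ℝ).toBasis.isUnitSMul fun _ ↦ hN.isUnit

variable {ι}

theorem scaledBasisFun_repr (hN : N ≠ 0) (v : EuclideanSpace ℝ ι) (i : ι) :
    (scaledBasisFun ι hN).repr v i = N⁻¹ * v i := by
  simp [scaledBasisFun, Basis.repr_isUnitSMul, Units.smul_def]

theorem mem_span_scaledBasisFun (hN : N ≠ 0) {g : EuclideanSpace ℝ ι} :
    g ∈ span ℤ (range (scaledBasisFun ι hN)) ↔ ∃ k : ι → ℤ, ∀ i, g i = N * k i := by
  simp only [Basis.mem_span_iff_repr_mem, scaledBasisFun_repr, mem_range, eq_intCast,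
    eq_inv_mul_iff_mul_eq₀ hN, eq_comm (a := N * _)]
  exact Classical.skolem

theorem fundamentalDomain_scaledBasisFun (hN : 0 < N) :
    ZSpan.fundamentalDomain (scaledBasisFun ι hN.ne') =
      ofLp ⁻¹' pi univ fun _ ↦ Ico 0 N := by
  ext v
  simp [scaledBasisFun_repr, inv_mul_eq_div, le_div_iff₀ hN, div_lt_one hN]

theorem le_norm_of_mem_span_scaledBasisFun (hN : N ≠ 0) {g : EuclideanSpace ℝ ι}
    (hg : g ∈ span ℤ (range (scaledBasisFun ι hN))) (hg0 : g ≠ 0) : |N| ≤ ‖g‖ := by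
  obtain ⟨k, hk⟩ := (mem_span_scaledBasisFun hN).mp hg
  obtain ⟨i, hi⟩ : ∃ i, k i ≠ 0 := by
    by_contra! h
    exact hg0 (PiLp.ext fun i ↦ by simp [hk, h])
  calc |N| ≤ |N| * |(k i : ℝ)| :=
        le_mul_of_one_le_right (abs_nonneg N) (by exact_mod_cast Int.one_le_abs hi)
    _ = ‖g i‖ := by rw [hk, Real.norm_eq_abs, abs_mul]
    _ ≤ ‖g‖ := PiLp.norm_apply_le g i

theorem mem_iUnion_span_scaledBasisFun_vadd_closedBall (hN : N ≠ 0)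
    {x v : EuclideanSpace ℝ ι} {r : ℝ} :
    v ∈ ⋃ g : span ℤ (range (scaledBasisFun ι hN)), g +ᵥ closedBall x r ↔
      ∃ k : ι → ℤ, dist (v + toLp 2 fun i ↦ N * k i) x ≤ r := by
  simp only [mem_iUnion, mem_vadd_set_iff_neg_vadd_mem, mem_closedBall, Submodule.vadd_def,
    vadd_eq_add, Subtype.exists, exists_prop]
  constructor
  · rintro ⟨g, hg, hgv⟩
    obtain ⟨k, hk⟩ := (mem_span_scaledBasisFun hN).mp (neg_mem hg)
    have hgk : (toLp 2 fun i ↦ N * k i) = -g := PiLp.ext fun i ↦ (hk i).symm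
    exact ⟨k, by rwa [hgk, add_comm]⟩
  · rintro ⟨k, hk⟩
    refine ⟨-toLp 2 fun i ↦ N * k i, ?_, ?_⟩
    · exact neg_mem ((mem_span_scaledBasisFun hN).mpr ⟨k, fun i ↦ rfl⟩)
    · rwa [neg_neg, add_comm]

theorem volume_cube_inter_iUnion_vadd_closedBall [Nonempty ι] (hN : 0 < N) {r : ℝ}
    (hrN : 2 * r ≤ N) (x : EuclideanSpace ℝ ι) :
    volume ((ofLp ⁻¹' pi univ fun _ ↦ Icc 0 N) ∩
        ⋃ g : span ℤ (range (scaledBasisFun ι hN.ne')), g +ᵥ closedBall x r) =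
      volume (closedBall x r) := by
  set L := span ℤ (range (scaledBasisFun ι hN.ne'))
  -- Mathlib provides this instance for additive subgroups only, not for `ℤ`-submodules.
  have : VAddInvariantMeasure L (EuclideanSpace ℝ ι) volume :=
    inferInstanceAs (VAddInvariantMeasure L.toAddSubgroup _ _)
  have hF := ZSpan.isAddFundamentalDomain (scaledBasisFun ι hN.ne') volume
  rw [fundamentalDomain_scaledBasisFun hN] at hF
  have hcube : (ofLp ⁻¹' pi univ fun _ : ι ↦ Ico 0 N) =ᵐ[volume]
      ofLp ⁻¹' pi univ fun _ ↦ Icc 0 N :=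
    (PiLp.volume_preserving_ofLp ι).quasiMeasurePreserving.preimage_ae_eq
      Measure.pi_Ico_ae_eq_pi_Icc
  rw [← measure_congr (hcube.inter (ae_eq_refl (⋃ g : L, g +ᵥ closedBall x r)))]
  refine hF.measure_inter_iUnion_vadd measurableSet_closedBall.nullMeasurableSet
    fun g g' hgg' ↦ ?_
  simp only [Function.onFun, Submodule.vadd_def, vadd_closedBall, vadd_eq_add]
  refine Measure.aedisjoint_closedBall_of_two_mul_le_dist _ (hrN.trans ?_)
  rw [dist_add_right, dist_eq_norm]
  exact (le_abs_self N).trans <| le_norm_of_mem_span_scaledBasisFun hN.ne' (sub_mem g.2 g'.2)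
    (sub_ne_zero.mpr (Subtype.coe_injective.ne hgg'))

end EuclideanSpace

theorem unitBallVol_eq_volume_closedBall (d : ℕ) :
    unitBallVol d = (volume (closedBall (0 : EuclideanSpace ℝ (Fin d)) 1)).toReal := by
  rw [unitBallVol,
    ← (EuclideanSpace.volume_preserving_symm_measurableEquiv_toLp (Fin d)).measure_preimage_equiv]
  congr 2
  ext v
  simp [EuclideanSpace.norm_eq]

/-- If the offset `v` is sampled uniformly from the cube `[0, 3w]^d`, then the probability that
some lattice ball center `u ∈ v + 3w·ℤ^d` satisfies `‖x − u‖₂ ≤ r` is exactly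
`V_d · (r/(3w))^d`. -/
theorem prob_lattice_ball_contains (d : ℕ) (hd : 1 ≤ d) (w r : ℝ) (hw : 0 < w) (hr : 0 < r)
    (hrw : 2 * r ≤ 3 * w) (x : Fin d → ℝ) :
    (volume {v : Fin d → ℝ | (∀ i, v i ∈ Set.Icc (0 : ℝ) (3 * w)) ∧
        ∃ k : Fin d → ℤ,
          Real.sqrt (∑ i, (x i - (v i + 3 * w * (k i))) ^ 2) ≤ r}).toReal / (3 * w) ^ d
      = unitBallVol d * (r / (3 * w)) ^ d := by
  have hN : 0 < 3 * w := by positivity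
  have : Nonempty (Fin d) := ⟨⟨0, hd⟩⟩
  have hpre : ofLp ⁻¹' {v : Fin d → ℝ | (∀ i, v i ∈ Set.Icc (0 : ℝ) (3 * w)) ∧
        ∃ k : Fin d → ℤ, Real.sqrt (∑ i, (x i - (v i + 3 * w * (k i))) ^ 2) ≤ r} =
      (ofLp ⁻¹' pi univ fun _ ↦ Icc 0 (3 * w)) ∩
        ⋃ g : span ℤ (range (EuclideanSpace.scaledBasisFun (Fin d) hN.ne')),
          g +ᵥ closedBall (toLp 2 x) r := by
    ext v
    simp only [mem_preimage, mem_ofPred_eq, mem_inter_iff, mem_pi, mem_univ, true_imp_iff,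
      EuclideanSpace.mem_iUnion_span_scaledBasisFun_vadd_closedBall, dist_comm _ (toLp 2 x),
      EuclideanSpace.dist_eq, Real.dist_eq, sq_abs]
    rfl
  have hvol := EuclideanSpace.volume_preserving_symm_measurableEquiv_toLp (Fin d)
  rw [← hvol.measure_preimage_equiv, MeasurableEquiv.coe_toLp_symm, hpre,
    EuclideanSpace.volume_cube_inter_iUnion_vadd_closedBall hN hrw,
    Measure.addHaar_closedBall' _ _ hr.le, finrank_euclideanSpace_fin,
    unitBallVol_eq_volume_closedBall, ENNReal.toReal_mul, ENNReal.toReal_ofReal (by positivity),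
    div_pow]
  field_simp
end

section
/- Let d ≥ 1 be an integer, w > 0, and r > 0 with 2r < 3w, and fix x, y ∈ ℝ^d. If an offset v is sampled uniformly from the cube [0, 3w]^d, then the probability that there exists u ∈ v + 3w·ℤ^d with ‖x − u‖₂ ≤ r and ‖y − u‖₂ ≤ r is exactly vol(Ball(x, r) ∩ Ball(y, r)) / (3w)^d, where vol denotes Lebesgue measure on ℝ^d. -/
open MeasureTheory

/-- The closed Euclidean ball of radius `r` centered at `x` in `ℝ^d`. -/
def euclBall (d : ℕ) (x : Fin d → ℝ) (r : ℝ) : Set (Fin d → ℝ) :=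
  {z | Real.sqrt (∑ i, (z i - x i) ^ 2) ≤ r}

/-!
Put `L = 3w` and `T = Ball(x, r) ∩ Ball(y, r)`. Two points of `T` differ by at most `2r < L` in
every coordinate, so the translates `g + T`, `g ∈ Lℤ^d`, are pairwise disjoint, and the event is
that `v` lies in their union. The half-open cube `[0, L)^d` is a fundamental domain of `Lℤ^d`, so
the pieces `(g + T) ∩ [0, L)^d` reassemble `T` after translation; hence the union meets the cube in
measure `vol T`. The closed cube differs from the half-open one by a null set.
-/

open Set Function Pointwise

namespace MeasureTheory.IsFundamentalDomain

variable {G α : Type*} [Group G] [MulAction G α] [MeasurableSpace α] {s t : Set α}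
  {μ : Measure α} [MeasurableConstSMul G α] [SMulInvariantMeasure G α μ] [Countable G]

@[to_additive]
theorem measure_iUnion_smul_inter (hs : IsFundamentalDomain G s μ) (ht : NullMeasurableSet t μ)
    (hd : Pairwise (AEDisjoint μ on fun g : G => g • t ∩ s)) :
    μ (⋃ g : G, g • t ∩ s) = μ t := by
  rw [measure_iUnion₀ hd fun g => (ht.smul g).inter hs.nullMeasurableSet, hs.measure_eq_tsum]

end MeasureTheory.IsFundamentalDomain

def cubicLattice (ι : Type*) (L : ℝ) : AddSubgroup (ι → ℝ) :=
  (AddMonoidHom.compLeft (zmultiplesHom ℝ L) ι).range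

section cubicLattice

variable {ι : Type*} {L : ℝ}

theorem mem_cubicLattice {g : ι → ℝ} :
    g ∈ cubicLattice ι L ↔ ∃ k : ι → ℤ, (fun i => L * k i) = g := by
  simp [cubicLattice, funext_iff, mul_comm]

theorem cubicLattice.vadd_apply (g : cubicLattice ι L) (x : ι → ℝ) (i : ι) :
    (g +ᵥ x) i = g.1 i + x i := rfl

instance [Finite ι] : Countable (cubicLattice ι L) :=
  (AddMonoidHom.rangeRestrict_surjective _).countable

theorem eq_zero_of_mem_cubicLattice_of_abs_lt {g : ι → ℝ} (hg : g ∈ cubicLattice ι L)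
    (hlt : ∀ i, |g i| < L) : g = 0 := by
  obtain ⟨k, rfl⟩ := mem_cubicLattice.1 hg
  ext i
  suffices k i = 0 by simp [this]
  by_contra hk
  have hki : |L| * |(k i : ℝ)| < L := by simpa only [abs_mul] using hlt i
  have hk1 : (1 : ℝ) ≤ |(k i : ℝ)| := by exact_mod_cast Int.one_le_abs hk
  nlinarith [le_abs_self L, abs_nonneg L]

theorem isAddFundamentalDomain_cubicLattice [Countable ι] (hL : 0 < L) (μ : Measure (ι → ℝ)) :
    IsAddFundamentalDomain (cubicLattice ι L) (univ.pi fun _ => Ico 0 L) μ := by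
  refine .mk' (MeasurableSet.univ_pi fun _ => measurableSet_Ico).nullMeasurableSet fun x => ?_
  obtain ⟨m, hm⟩ := forall_existsUnique_iff.1 fun i => existsUnique_add_zsmul_mem_Ico hL (x i) 0
  simp only [zero_add, zsmul_eq_mul] at hm
  refine ⟨⟨fun i => L * m i, mem_cubicLattice.2 ⟨m, rfl⟩⟩, fun i _ => ?_, ?_⟩
  · dsimp only [cubicLattice.vadd_apply]
    rw [add_comm, mul_comm]
    exact hm.2 rfl
  · rintro ⟨g, hg⟩ hgx
    obtain ⟨k, rfl⟩ := mem_cubicLattice.1 hg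
    ext i
    have hi := hgx i trivial
    dsimp only [cubicLattice.vadd_apply] at hi
    rw [add_comm, mul_comm] at hi
    simp [← hm.1 hi]

theorem pairwise_disjoint_vadd_cubicLattice {T : Set (ι → ℝ)}
    (hT : ∀ u ∈ T, ∀ u' ∈ T, ∀ i, |u i - u' i| < L) :
    Pairwise (Disjoint on fun g : cubicLattice ι L => g +ᵥ T) := by
  intro g g' hne
  refine Set.disjoint_left.2 fun v hv hv' => hne ?_
  rw [mem_vadd_set_iff_neg_vadd_mem] at hv hv'
  have h := eq_zero_of_mem_cubicLattice_of_abs_lt (g' - g).2 fun i => by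
    convert hT _ hv _ hv' i using 2
    simp only [cubicLattice.vadd_apply, AddSubgroup.coe_sub, AddSubgroup.coe_neg, Pi.sub_apply,
      Pi.neg_apply]
    ring
  exact (sub_eq_zero.1 (Subtype.ext h)).symm

theorem setOf_exists_add_mem_eq_iUnion_vadd (T : Set (ι → ℝ)) :
    {v : ι → ℝ | ∃ k : ι → ℤ, (fun i => v i + L * k i) ∈ T} = ⋃ g : cubicLattice ι L, g +ᵥ T := by
  ext v
  simp only [mem_ofPred_eq, mem_iUnion, mem_vadd_set_iff_neg_vadd_mem]
  refine ⟨fun ⟨k, hk⟩ => ?_, fun ⟨⟨g, hg⟩, hv⟩ => ?_⟩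
  · refine ⟨⟨fun i => L * ↑(-k i), mem_cubicLattice.2 ⟨-k, rfl⟩⟩, ?_⟩
    convert hk using 1
    ext i
    simp [cubicLattice.vadd_apply, add_comm]
  · obtain ⟨k, rfl⟩ := mem_cubicLattice.1 hg
    refine ⟨-k, ?_⟩
    convert hv using 1
    ext i
    simp [cubicLattice.vadd_apply]
    ring

theorem volume_setOf_forall_mem_Icc_exists_add_mem [Fintype ι] (hL : 0 < L) {T : Set (ι → ℝ)}
    (hTm : NullMeasurableSet T) (hT : ∀ u ∈ T, ∀ u' ∈ T, ∀ i, |u i - u' i| < L) :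
    volume {v : ι → ℝ | (∀ i, v i ∈ Icc 0 L) ∧ ∃ k : ι → ℤ, (fun i => v i + L * k i) ∈ T} =
      volume T := by
  have hcube : {v : ι → ℝ | ∀ i, v i ∈ Icc 0 L} = univ.pi fun _ => Icc 0 L := by
    ext v
    simp only [mem_ofPred_eq, mem_univ_pi]
  calc _ = volume ((⋃ g : cubicLattice ι L, g +ᵥ T) ∩ univ.pi fun _ => Ico 0 L) := by
        rw [ofPred_and, hcube, setOf_exists_add_mem_eq_iUnion_vadd, inter_comm, pi_univ_Icc]
        exact measure_congr ((ae_eq_refl _).inter Measure.univ_pi_Ico_ae_eq_Icc.symm)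
    _ = volume T := by
        rw [iUnion_inter]
        exact (isAddFundamentalDomain_cubicLattice hL volume).measure_iUnion_vadd_inter hTm
          fun g g' hne => ((pairwise_disjoint_vadd_cubicLattice hT hne).mono
            inter_subset_left inter_subset_left).aedisjoint

end cubicLattice

section euclBall

variable {d : ℕ} {x z : Fin d → ℝ} {r : ℝ}

theorem mem_euclBall_iff' : z ∈ euclBall d x r ↔ √(∑ i, (x i - z i) ^ 2) ≤ r := by
  simp only [euclBall, mem_ofPred_eq, sub_sq_comm]

theorem measurableSet_euclBall : MeasurableSet (euclBall d x r) :=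
  measurableSet_le (by fun_prop) measurable_const

theorem abs_sub_le_of_mem_euclBall (hz : z ∈ euclBall d x r) (i : Fin d) : |z i - x i| ≤ r :=
  (Real.abs_le_sqrt (Finset.single_le_sum (fun j _ => sq_nonneg (z j - x j))
    (Finset.mem_univ i))).trans hz

theorem abs_sub_le_two_mul_of_mem_euclBall {z' : Fin d → ℝ} (hz : z ∈ euclBall d x r)
    (hz' : z' ∈ euclBall d x r) (i : Fin d) : |z i - z' i| ≤ 2 * r :=
  calc |z i - z' i| ≤ |z i - x i| + |z' i - x i| := abs_sub_comm (z' i) (x i) ▸ abs_sub_le _ _ _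
    _ ≤ 2 * r := by linarith [abs_sub_le_of_mem_euclBall hz i, abs_sub_le_of_mem_euclBall hz' i]

end euclBall

theorem prob_lattice_ball_contains_pair_general (d : ℕ) (w r : ℝ) (hw : 0 < w)
    (hrw : 2 * r < 3 * w) (x y : Fin d → ℝ) :
    (volume {v : Fin d → ℝ | (∀ i, v i ∈ Set.Icc (0 : ℝ) (3 * w)) ∧
        ∃ k : Fin d → ℤ,
          Real.sqrt (∑ i, (x i - (v i + 3 * w * (k i))) ^ 2) ≤ r ∧
          Real.sqrt (∑ i, (y i - (v i + 3 * w * (k i))) ^ 2) ≤ r}).toReal / (3 * w) ^ d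
      = (volume (euclBall d x r ∩ euclBall d y r)).toReal / (3 * w) ^ d := by
  have hwidth : ∀ u ∈ euclBall d x r ∩ euclBall d y r, ∀ u' ∈ euclBall d x r ∩ euclBall d y r,
      ∀ i, |u i - u' i| < 3 * w :=
    fun u hu u' hu' i => (abs_sub_le_two_mul_of_mem_euclBall hu.1 hu'.1 i).trans_lt hrw
  rw [← volume_setOf_forall_mem_Icc_exists_add_mem (by positivity)
    (measurableSet_euclBall.inter measurableSet_euclBall).nullMeasurableSet hwidth]
  simp only [mem_inter_iff, mem_euclBall_iff']

/-- If the offset `v` is sampled uniformly from the cube `[0, 3w]^d`, the probability that some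
lattice point `u ∈ v + 3w·ℤ^d` has `‖x − u‖₂ ≤ r` and `‖y − u‖₂ ≤ r` is exactly
`vol(Ball(x,r) ∩ Ball(y,r)) / (3w)^d`. -/
theorem prob_lattice_ball_contains_pair (d : ℕ) (hd : 1 ≤ d) (w r : ℝ) (hw : 0 < w)
    (hr : 0 < r) (hrw : 2 * r < 3 * w) (x y : Fin d → ℝ) :
    (volume {v : Fin d → ℝ | (∀ i, v i ∈ Set.Icc (0 : ℝ) (3 * w)) ∧
        ∃ k : Fin d → ℤ,
          Real.sqrt (∑ i, (x i - (v i + 3 * w * (k i))) ^ 2) ≤ r ∧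
          Real.sqrt (∑ i, (y i - (v i + 3 * w * (k i))) ^ 2) ≤ r}).toReal / (3 * w) ^ d
      = (volume (euclBall d x r ∩ euclBall d y r)).toReal / (3 * w) ^ d :=
  prob_lattice_ball_contains_pair_general d w r hw hrw x y
end

section
/- Let d ≥ 1 be an integer, w > 0, t ≥ 0, and let x, y ∈ ℝ^d satisfy ‖x − y‖₂ ≥ t. If an offset v is sampled uniformly from the cube [0, 3w]^d, then the probability that there exists u ∈ v + 3w·ℤ^d with both x, y ∈ Ball(u, w) is at most V_d · 3^{−d} · exp(−(d/2) · t²/(4w²)). -/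
/-!
An offset `v` is favourable only if some translate `v + 3w·k` lies in the lens
`B = Ball(x, w) ∩ Ball(y, w)`. The cube `[0, 3w]^d` is, up to a null set, a fundamental domain of
the lattice `3w·ℤ^d`, so the favourable offsets have measure at most `vol B`. By Apollonius's
theorem `B` lies in the ball around the midpoint of `x, y` of radius
`r = √(w² - ‖x - y‖²/4) ≤ w·exp(-t²/(8w²))` (as `1 - s ≤ exp(-s)`), hence `vol B ≤ V_d r^d`.
-/

open MeasureTheory

open Metric Module Submodule WithLp
open scoped Pointwise

theorem MeasureTheory.IsAddFundamentalDomain.measure_inter_iUnion_vadd_le {G α : Type*}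
    [AddGroup G] [Countable G] [AddAction G α] [MeasurableSpace α] [MeasurableSpace G]
    [MeasurableVAdd G α] {μ : Measure α} [VAddInvariantMeasure G α μ] {s : Set α}
    (h : IsAddFundamentalDomain G s μ) (t : Set α) :
    μ (s ∩ ⋃ g : G, g +ᵥ t) ≤ μ t := by
  rw [Set.inter_iUnion, h.measure_eq_tsum t]
  simpa only [Set.inter_comm s] using measure_iUnion_le _

theorem EuclideanGeometry.closedBall_inter_closedBall_subset_closedBall_midpoint {V P : Type*}
    [NormedAddCommGroup V] [InnerProductSpace ℝ V] [MetricSpace P] [NormedAddTorsor V P]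
    (x y : P) (w : ℝ) :
    closedBall x w ∩ closedBall y w ⊆
      closedBall (midpoint ℝ x y) √(w ^ 2 - (dist x y / 2) ^ 2) := by
  rintro z ⟨hx, hy⟩
  rw [mem_closedBall] at hx hy ⊢
  have apollonius := dist_sq_add_dist_sq_eq_two_mul_dist_midpoint_sq_add_half_dist_sq z x y
  have hx2 := pow_le_pow_left₀ dist_nonneg hx 2
  have hy2 := pow_le_pow_left₀ dist_nonneg hy 2
  exact Real.le_sqrt_of_sq_le (by linarith)

theorem addHaar_real_closedBall_inter_closedBall_le {E : Type*} [NormedAddCommGroup E]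
    [InnerProductSpace ℝ E] [FiniteDimensional ℝ E] [MeasurableSpace E] [BorelSpace E]
    (μ : Measure E) [μ.IsAddHaarMeasure] (x y : E) (w : ℝ) :
    μ.real (closedBall x w ∩ closedBall y w) ≤
      √(w ^ 2 - (dist x y / 2) ^ 2) ^ finrank ℝ E * μ.real (closedBall 0 1) :=
  (measureReal_mono
    (EuclideanGeometry.closedBall_inter_closedBall_subset_closedBall_midpoint x y w)
    measure_closedBall_lt_top.ne).trans_eq (μ.addHaar_real_closedBall' _ (Real.sqrt_nonneg _))

theorem Real.sqrt_sq_mul_one_sub_le_mul_exp {w : ℝ} (hw : 0 ≤ w) (u : ℝ) :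
    √(w ^ 2 * (1 - u)) ≤ w * exp (-u / 2) := by
  have hexp : exp (-u / 2) ^ 2 = exp (-u) := by
    rw [← exp_nat_mul]
    ring_nf
  calc √(w ^ 2 * (1 - u)) ≤ √((w * exp (-u / 2)) ^ 2) := by
        rw [mul_pow, hexp]
        gcongr
        linarith [add_one_le_exp (-u)]
    _ = w * exp (-u / 2) := sqrt_sq (by positivity)

section Coordinates

variable {ι : Type*} [Fintype ι]

theorem EuclideanSpace.dist_toLp (x y : ι → ℝ) :
    dist (toLp 2 x) (toLp 2 y) = √(∑ i, (x i - y i) ^ 2) := by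
  simp [EuclideanSpace.dist_eq, Real.dist_eq, sq_abs]

theorem EuclideanSpace.volume_preimage_toLp (s : Set (EuclideanSpace ℝ ι)) :
    volume (toLp 2 ⁻¹' s) = volume s :=
  (EuclideanSpace.volume_preserving_symm_measurableEquiv_toLp ι).symm.measure_preimage_equiv s

theorem volume_setOf_mem_Icc_exists_add_mem_le {a : ℝ} (ha : 0 < a) (B : Set (ι → ℝ)) :
    volume {v : ι → ℝ | (∀ i, v i ∈ Set.Icc 0 a) ∧ ∃ k : ι → ℤ, (fun i => v i + a * k i) ∈ B}
      ≤ volume B := by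
  classical
  -- `b = (a • eᵢ)ᵢ` spans the lattice `a • ℤ^ι`, and its parallelepiped is the cube `[0, a]^ι`.
  set b := (Pi.basisFun ℝ ι).unitsSMul fun _ => Units.mk0 a ha.ne'
  set L := span ℤ (Set.range b)
  have : MeasurableVAdd L (ι → ℝ) := (inferInstance : MeasurableVAdd L.toAddSubgroup (ι → ℝ))
  have : VAddInvariantMeasure L (ι → ℝ) volume :=
    (inferInstance : VAddInvariantMeasure L.toAddSubgroup (ι → ℝ) volume)
  have hb : ⇑b = fun i => Pi.single i a := by
    ext i j
    simp [b, Module.Basis.unitsSMul_apply, Pi.single_apply]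
  have hcube : Set.pi Set.univ (fun _ => Set.Icc 0 a) =ᵐ[volume] ZSpan.fundamentalDomain b := by
    have := parallelepiped_single (ι := ι) fun _ => a
    rw [Set.uIcc_of_le (fun _ => ha.le), ← hb, ← Set.pi_univ_Icc] at this
    exact this ▸ (ZSpan.fundamentalDomain_ae_parallelepiped b volume).symm
  have hlattice (k : ι → ℤ) : (fun i => a * k i) ∈ L := by
    have : (fun i => a * k i) = ∑ i, k i • b i := by
      ext j
      simp [hb, Finset.sum_apply, Pi.single_apply, mul_comm]
    rw [this]
    exact sum_mem fun i _ => zsmul_mem (subset_span (Set.mem_range_self i)) _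
  calc volume {v : ι → ℝ | (∀ i, v i ∈ Set.Icc 0 a) ∧ ∃ k : ι → ℤ, (fun i => v i + a * k i) ∈ B}
      ≤ volume (Set.pi Set.univ (fun _ => Set.Icc 0 a) ∩ ⋃ g : L, g +ᵥ B) := by
        refine measure_mono fun v ⟨hv, k, hk⟩ => ⟨fun i _ => hv i, ?_⟩
        refine Set.mem_iUnion.2 ⟨⟨-fun i => a * k i, neg_mem (hlattice k)⟩, _, hk, ?_⟩
        ext i
        simp
    _ = volume (ZSpan.fundamentalDomain b ∩ ⋃ g : L, g +ᵥ B) :=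
        measure_congr (hcube.inter (ae_eq_refl _))
    _ ≤ volume B := (ZSpan.isAddFundamentalDomain b volume).measure_inter_iUnion_vadd_le B

theorem volume_real_setOf_exists_add_mem_closedBall_inter_le {a : ℝ} (ha : 0 < a)
    (x y : ι → ℝ) (w : ℝ) :
    (volume {v : ι → ℝ | (∀ i, v i ∈ Set.Icc 0 a) ∧ ∃ k : ι → ℤ,
        √(∑ i, (x i - (v i + a * k i)) ^ 2) ≤ w ∧ √(∑ i, (y i - (v i + a * k i)) ^ 2) ≤ w}).toReal
      ≤ volume.real (closedBall (toLp 2 x) w ∩ closedBall (toLp 2 y) w) := by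
  rw [measureReal_def, ← EuclideanSpace.volume_preimage_toLp]
  refine ENNReal.toReal_mono ?_
    ((measure_mono ?_).trans (volume_setOf_mem_Icc_exists_add_mem_le ha _))
  · rw [EuclideanSpace.volume_preimage_toLp]
    exact (isBounded_closedBall.subset Set.inter_subset_left).measure_lt_top.ne
  · rintro v ⟨hv, k, hx, hy⟩
    refine ⟨hv, k, ?_, ?_⟩ <;> rwa [mem_closedBall, dist_comm, EuclideanSpace.dist_toLp]

end Coordinates

theorem unitBallVol_eq (d : ℕ) :
    unitBallVol d = volume.real (closedBall (0 : EuclideanSpace ℝ (Fin d)) 1) := by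
  rw [unitBallVol, measureReal_def, ← EuclideanSpace.volume_preimage_toLp]
  congr 2
  ext z
  simp [EuclideanSpace.norm_eq]

theorem prob_distant_pair_covered_general (d : ℕ) (w t : ℝ) (hw : 0 < w) (ht : 0 ≤ t)
    (x y : Fin d → ℝ) (hxy : t ≤ Real.sqrt (∑ i, (x i - y i) ^ 2)) :
    (volume {v : Fin d → ℝ | (∀ i, v i ∈ Set.Icc (0 : ℝ) (3 * w)) ∧
        ∃ k : Fin d → ℤ,
          Real.sqrt (∑ i, (x i - (v i + 3 * w * (k i))) ^ 2) ≤ w ∧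
          Real.sqrt (∑ i, (y i - (v i + 3 * w * (k i))) ^ 2) ≤ w}).toReal / (3 * w) ^ d
      ≤ unitBallVol d * ((1 : ℝ) / 3) ^ d *
          Real.exp (-((d : ℝ) / 2) * (t ^ 2 / (4 * w ^ 2))) := by
  set r := √(w ^ 2 - (dist (toLp 2 x) (toLp 2 y) / 2) ^ 2)
  have hr : r ≤ w * Real.exp (-(t ^ 2 / (4 * w ^ 2)) / 2) := by
    refine (Real.sqrt_le_sqrt ?_).trans (Real.sqrt_sq_mul_one_sub_le_mul_exp hw.le _)
    have : w ^ 2 * (1 - t ^ 2 / (4 * w ^ 2)) = w ^ 2 - (t / 2) ^ 2 := by field_simp; ring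
    rw [this, EuclideanSpace.dist_toLp]
    gcongr
  have hV : 0 ≤ unitBallVol d := ENNReal.toReal_nonneg
  calc _ ≤ volume.real (closedBall (toLp 2 x) w ∩ closedBall (toLp 2 y) w) / (3 * w) ^ d := by
        gcongr
        exact volume_real_setOf_exists_add_mem_closedBall_inter_le (by positivity) x y w
    _ ≤ r ^ d * unitBallVol d / (3 * w) ^ d := by
        gcongr
        simpa [unitBallVol_eq] using
          addHaar_real_closedBall_inter_closedBall_le volume (toLp 2 x) (toLp 2 y) w
    _ ≤ (w * Real.exp (-(t ^ 2 / (4 * w ^ 2)) / 2)) ^ d * unitBallVol d / (3 * w) ^ d := by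
        gcongr
    _ = _ := by
        rw [mul_pow, ← Real.exp_nat_mul, one_div, inv_pow, mul_pow]
        field_simp

/-- If `‖x − y‖₂ ≥ t` and the offset `v` is sampled uniformly from `[0, 3w]^d`, then the
probability that some `u ∈ v + 3w·ℤ^d` satisfies `x, y ∈ Ball(u, w)` is at most
`V_d · 3^{−d} · exp(−(d/2) · t²/(4w²))`. -/
theorem prob_distant_pair_covered (d : ℕ) (hd : 1 ≤ d) (w t : ℝ) (hw : 0 < w) (ht : 0 ≤ t)
    (x y : Fin d → ℝ) (hxy : t ≤ Real.sqrt (∑ i, (x i - y i) ^ 2)) :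
    (volume {v : Fin d → ℝ | (∀ i, v i ∈ Set.Icc (0 : ℝ) (3 * w)) ∧
        ∃ k : Fin d → ℤ,
          Real.sqrt (∑ i, (x i - (v i + 3 * w * (k i))) ^ 2) ≤ w ∧
          Real.sqrt (∑ i, (y i - (v i + 3 * w * (k i))) ^ 2) ≤ w}).toReal / (3 * w) ^ d
      ≤ unitBallVol d * ((1 : ℝ) / 3) ^ d *
          Real.exp (-((d : ℝ) / 2) * (t ^ 2 / (4 * w ^ 2))) :=
  prob_distant_pair_covered_general d w t hw ht x y hxy
end

section
/- Let d' divide d with d' ≥ 16, set ε := 4/√d', let h be a 2-wise independent random permutation of [d], and let σ be 4-wise independent uniform random signs on [d], with h and σ independent of each other. Then for every x ∈ ℝ^d with ‖x‖₂ = 1, ℙ( |√(d/d') · ‖A_{h,σ} x‖₂ − 1| > ε ) < 1/2. -/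
open MeasureTheory

/-- `‖A_{h,σ} x‖₂²` for the modified CountSketch matrix `A_{h,σ}` with blocks of size `d/d'`:
`(A_{h,σ} x)_r = √(d'/d) · ∑_{i : h(i) ∈ B_r} σ(i)·x_i`, where `B_r` is the `r`-th consecutive
block of `[d]` of size `d/d'` (the block index of `a : Fin d` is `a.val / (d/d')`). -/
noncomputable def sketchNormSq (d d' : ℕ) (π : Equiv.Perm (Fin d)) (s : Fin d → ℝ)
    (x : Fin d → ℝ) : ℝ :=
  ∑ r : Fin d',
    (Real.sqrt ((d' : ℝ) / (d : ℝ)) *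
      ∑ i ∈ Finset.univ.filter (fun i : Fin d => (π i).val / (d / d') = (r : ℕ)),
        s i * x i) ^ 2

/-!
Expanding the square gives `(d/d') ‖A_{h,σ} x‖² = ‖x‖² + Z` with
`Z = ∑_{i ≠ j} [h i, h j lie in the same block] σ_i σ_j x_i x_j`. Four-wise independence of the
signs gives Wick's formula `𝔼[σ_a σ_b σ_c σ_e] = [(c,e) = (a,b)] + [(c,e) = (b,a)]` for `a ≠ b`,
`c ≠ e`, so independence of `h` and `σ` yields
`𝔼[Z²] = 2 ∑_{i ≠ j} ℙ(h i, h j in the same block) x_i² x_j² ≤ 2/d'`: by two-wise independence a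
collision has probability `(m - 1)/(d - 1) ≤ 1/d'`. As `|√Y - 1| ≤ |Y - 1|`, Chebyshev bounds the
failure probability by `(2/d')/ε² = 1/8`. All random variables involved take finitely many values,
so expectations are finite sums weighted by the probabilities of the fibres.
-/

open Finset

section FiniteValued

variable {Ω ι κ : Type*} [MeasurableSpace Ω] (μ : Measure Ω) [IsFiniteMeasure μ]
  {c : Ω → ι} {S : Finset ι}

theorem measureReal_setOf_eq_sum (hcS : ∀ ω, c ω ∈ S)
    (hc : ∀ i, MeasurableSet {ω | c ω = i}) (P : ι → Prop) [DecidablePred P] :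
    μ.real {ω | P (c ω)} = ∑ i ∈ S with P i, μ.real {ω | c ω = i} := by
  have hunion : {ω | P (c ω)} = ⋃ i ∈ S.filter P, {ω | c ω = i} := by
    ext ω
    simp only [Set.mem_ofPred_eq, Set.mem_iUnion, mem_filter, exists_prop]
    exact ⟨fun hP => ⟨c ω, ⟨hcS ω, hP⟩, rfl⟩, by rintro ⟨i, ⟨-, hP⟩, rfl⟩; exact hP⟩
  rw [hunion, measureReal_biUnion_finset _ fun i _ => hc i]
  intro i _ j _ hij
  exact Set.disjoint_left.mpr fun ω hi hj => hij (hi.symm.trans hj)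

theorem sum_measureReal_fiber_mul [DecidableEq κ] {T : Finset κ} {k : ι → κ}
    (hcS : ∀ ω, c ω ∈ S) (hkT : ∀ i ∈ S, k i ∈ T) (hc : ∀ i, MeasurableSet {ω | c ω = i})
    (φ : κ → ℝ) :
    ∑ i ∈ S, μ.real {ω | c ω = i} * φ (k i) = ∑ t ∈ T, μ.real {ω | k (c ω) = t} * φ t := by
  symm
  calc ∑ t ∈ T, μ.real {ω | k (c ω) = t} * φ t
      = ∑ t ∈ T, ∑ i ∈ S with k i = t, μ.real {ω | c ω = i} * φ t := by
        refine sum_congr rfl fun t _ => ?_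
        rw [measureReal_setOf_eq_sum μ hcS hc (k · = t), sum_mul]
    _ = ∑ t ∈ T, ∑ i ∈ S with k i = t, μ.real {ω | c ω = i} * φ (k i) :=
        sum_congr rfl fun t _ => sum_congr rfl fun i hi => by rw [(mem_filter.1 hi).2]
    _ = _ := sum_fiberwise_of_maps_to hkT _

theorem measureReal_setOf_prod_eq_sum {α β : Type*} [Fintype α] [DecidableEq α]
    [DecidableEq β] {c₁ : Ω → α} {c₂ : Ω → β} {T : Finset β} (hc₂T : ∀ ω, c₂ ω ∈ T)
    (hc₁ : ∀ a, MeasurableSet {ω | c₁ ω = a}) (hc₂ : ∀ b, MeasurableSet {ω | c₂ ω = b})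
    (hind : ∀ a b, μ.real {ω | c₁ ω = a ∧ c₂ ω = b} = μ.real {ω | c₁ ω = a} * μ.real {ω | c₂ ω = b})
    (P : α × β → Prop) [DecidablePred P] :
    μ.real {ω | P (c₁ ω, c₂ ω)}
      = ∑ y ∈ univ ×ˢ T with P y, μ.real {ω | c₁ ω = y.1} * μ.real {ω | c₂ ω = y.2} := by
  have hfiber : ∀ y : α × β, {ω | (c₁ ω, c₂ ω) = y} = {ω | c₁ ω = y.1 ∧ c₂ ω = y.2} :=
    fun y => by simp [Prod.ext_iff]
  refine (measureReal_setOf_eq_sum μ (c := fun ω => (c₁ ω, c₂ ω))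
    (fun ω => mem_product.2 ⟨mem_univ _, hc₂T ω⟩)
    (fun y => hfiber y ▸ (hc₁ y.1).inter (hc₂ y.2)) P).trans ?_
  exact sum_congr rfl fun y _ => (congrArg μ.real (hfiber y)).trans (hind y.1 y.2)

end FiniteValued

theorem sum_filter_le_sum_mul_sq_div {α : Type*} {s : Finset α} {w Z : α → ℝ} {ε : ℝ}
    (P : α → Prop) [DecidablePred P] (hε : 0 < ε) (hw : ∀ a ∈ s, 0 ≤ w a)
    (hP : ∀ a ∈ s, P a → ε ≤ |Z a|) :
    ∑ a ∈ s with P a, w a ≤ (∑ a ∈ s, w a * Z a ^ 2) / ε ^ 2 := by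
  rw [le_div_iff₀ (by positivity), sum_mul]
  calc ∑ a ∈ s with P a, w a * ε ^ 2
      ≤ ∑ a ∈ s with P a, w a * Z a ^ 2 := by
        refine sum_le_sum fun a ha => ?_
        rw [mem_filter] at ha
        have hεZ : ε ^ 2 ≤ Z a ^ 2 := sq_abs (Z a) ▸ pow_le_pow_left₀ hε.le (hP a ha.1 ha.2) 2
        exact mul_le_mul_of_nonneg_left hεZ (hw a ha.1)
    _ ≤ ∑ a ∈ s, w a * Z a ^ 2 :=
        sum_le_sum_of_subset_of_nonneg (filter_subset _ _)
          fun a ha _ => mul_nonneg (hw a ha) (sq_nonneg _)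

theorem abs_sqrt_sub_one_le {y : ℝ} (hy : 0 ≤ y) : |√y - 1| ≤ |y - 1| := by
  have hfactor : y - 1 = (√y - 1) * (√y + 1) := by
    nth_rewrite 1 [← Real.sq_sqrt hy]; ring
  rw [hfactor, abs_mul, abs_of_pos (by positivity : 0 < √y + 1)]
  exact le_mul_of_one_le_right (abs_nonneg _) (by linarith [Real.sqrt_nonneg y])

theorem sum_sq_sum_filter_eq {ι κ : Type*} [Fintype ι] [DecidableEq κ] {R : Finset κ}
    {key : ι → κ} (hkey : ∀ i, key i ∈ R) (t : ι → ℝ) :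
    ∑ r ∈ R, (∑ i with key i = r, t i) ^ 2
      = ∑ i, ∑ j, if key i = key j then t i * t j else 0 := by
  calc ∑ r ∈ R, (∑ i with key i = r, t i) ^ 2
      = ∑ r ∈ R, ∑ i with key i = r, ∑ j, if key i = key j then t i * t j else 0 := by
        refine sum_congr rfl fun r _ => ?_
        rw [sq, sum_mul]
        refine sum_congr rfl fun i hi => ?_
        rw [← (mem_filter.1 hi).2, mul_sum, sum_filter]
        exact sum_congr rfl fun j _ => if_congr eq_comm rfl rfl
    _ = _ := sum_fiberwise_of_maps_to (fun i _ => hkey i) _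

theorem sum_sum_eq_sum_add_sum_offDiag {ι M : Type*} [Fintype ι] [DecidableEq ι]
    [AddCommMonoid M] (f : ι → ι → M) :
    ∑ i, ∑ j, f i j = ∑ i, f i i + ∑ p ∈ (univ : Finset ι).offDiag, f p.1 p.2 := by
  rw [← sum_product' univ univ f, ← diag_union_offDiag,
    sum_union (disjoint_diag_offDiag _), sum_diag]

theorem sum_sum_mul_mul_sq {α β γ : Type*} (A : Finset α) (B : Finset β) (P : Finset γ)
    (u : α → ℝ) (v : β → ℝ) (f : γ → α → ℝ) (g : γ → β → ℝ) :
    ∑ a ∈ A, ∑ b ∈ B, u a * v b * (∑ p ∈ P, f p a * g p b) ^ 2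
      = ∑ p ∈ P, ∑ p' ∈ P,
          (∑ a ∈ A, u a * (f p a * f p' a)) * ∑ b ∈ B, v b * (g p b * g p' b) := by
  simp only [sq, mul_sum, sum_mul]
  simp_rw [sum_comm (s := B) (t := P), sum_comm (s := A) (t := P)]
  rw [sum_comm]
  refine sum_congr rfl fun p _ => sum_congr rfl fun p' _ => ?_
  rw [sum_comm]
  exact sum_congr rfl fun a _ => sum_congr rfl fun b _ => by ring

theorem sum_offDiag_mul_sq_le {ι : Type*} [Fintype ι] [DecidableEq ι]
    {c : ι × ι → ℝ} {κ : ℝ} (hκ : 0 ≤ κ) (hc : ∀ p ∈ (univ : Finset ι).offDiag, c p ≤ κ)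
    (x : ι → ℝ) :
    ∑ p ∈ (univ : Finset ι).offDiag, c p * (x p.1 * x p.2) ^ 2 ≤ κ * (∑ i, x i ^ 2) ^ 2 := by
  calc ∑ p ∈ (univ : Finset ι).offDiag, c p * (x p.1 * x p.2) ^ 2
      ≤ ∑ p ∈ (univ : Finset ι).offDiag, κ * (x p.1 * x p.2) ^ 2 :=
        sum_le_sum fun p hp => mul_le_mul_of_nonneg_right (hc p hp) (sq_nonneg _)
    _ ≤ ∑ p : ι × ι, κ * (x p.1 * x p.2) ^ 2 :=
        sum_le_sum_of_subset_of_nonneg (subset_univ _) fun _ _ _ => by positivity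
    _ = κ * (∑ i, x i ^ 2) ^ 2 := by
        rw [← mul_sum, sq (∑ i, _), sum_mul_sum, ← univ_product_univ, sum_product]
        simp only [mul_pow]

theorem card_offDiag_filter_div_eq_le (d : ℕ) {m : ℕ} (hm : 0 < m) :
    #{p ∈ (univ : Finset (Fin d)).offDiag | (p.1 : ℕ) / m = p.2 / m} ≤ d * (m - 1) := by
  rw [card_eq_sum_card_fiberwise (f := Prod.fst) (t := univ) fun _ _ => mem_univ _]
  calc ∑ a, #{p ∈ {p ∈ (univ : Finset (Fin d)).offDiag | (p.1 : ℕ) / m = p.2 / m} | p.1 = a}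
      ≤ ∑ a : Fin d, #((range m).erase (a % m)) := by
        refine sum_le_sum fun a _ => card_le_card_of_injOn (fun p => (p.2 : ℕ) % m) ?_ ?_
        · intro p hp
          simp only [coe_filter, mem_filter, mem_offDiag, mem_univ, true_and,
            Set.mem_ofPred_eq] at hp
          obtain ⟨⟨hne, hblock⟩, rfl⟩ := hp
          simp only [coe_erase, coe_range, Set.mem_sdiff, Set.mem_Iio, Set.mem_singleton_iff]
          exact ⟨Nat.mod_lt _ hm, fun hmod => hne (Fin.ext (Nat.ext_div_mod hblock hmod.symm))⟩
        · intro p hp p' hp' hmod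
          simp only [coe_filter, mem_filter, mem_offDiag, mem_univ, true_and,
            Set.mem_ofPred_eq] at hp hp'
          obtain ⟨⟨-, hblock⟩, rfl⟩ := hp
          obtain ⟨⟨-, hblock'⟩, hfst⟩ := hp'
          rw [hfst] at hblock'
          exact Prod.ext hfst.symm (Fin.ext (Nat.ext_div_mod (hblock.symm.trans hblock') hmod))
    _ = d * (m - 1) := by
        simp [card_erase_of_mem (mem_range.2 (Nat.mod_lt _ hm))]

theorem exists_pair_ne_of_four_le {d : ℕ} (hd : 4 ≤ d) (a b : Fin d) :
    ∃ e f : Fin d, e ≠ f ∧ a ≠ e ∧ a ≠ f ∧ b ≠ e ∧ b ≠ f := by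
  have : 1 < #({a, b}ᶜ : Finset (Fin d)) := by
    rw [card_compl, Fintype.card_fin]
    have := card_le_two (a := a) (b := b)
    omega
  obtain ⟨e, he, f, hf, hef⟩ := one_lt_card.1 this
  simp only [mem_compl, mem_insert, mem_singleton, not_or] at he hf
  exact ⟨e, f, hef, Ne.symm he.1, Ne.symm hf.1, Ne.symm he.2, Ne.symm hf.2⟩

noncomputable def signVectors (d : ℕ) : Finset (Fin d → ℝ) := Fintype.piFinset fun _ => {1, -1}

theorem mem_signVectors {d : ℕ} {g : Fin d → ℝ} :
    g ∈ signVectors d ↔ ∀ i, g i = 1 ∨ g i = -1 := by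
  simp [signVectors]

theorem mul_self_eq_one_of_mem_signVectors {d : ℕ} {g : Fin d → ℝ} (hg : g ∈ signVectors d)
    (i : Fin d) : g i * g i = 1 := by
  rcases mem_signVectors.1 hg i with h | h <;> simp [h]

section SignMoments

variable {d : ℕ} {r : (Fin d → ℝ) → ℝ}

theorem sum_mul_sign_moment_four (hr1 : ∑ g ∈ signVectors d, r g = 1)
    (hr2 : ∀ a b, a ≠ b → ∑ g ∈ signVectors d, r g * (g a * g b) = 0)
    (hr4 : ∀ a b c e, a ≠ b → a ≠ c → a ≠ e → b ≠ c → b ≠ e → c ≠ e →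
      ∑ g ∈ signVectors d, r g * (g a * g b * (g c * g e)) = 0)
    {p p' : Fin d × Fin d} (hp : p.1 ≠ p.2) (hp' : p'.1 ≠ p'.2) :
    ∑ g ∈ signVectors d, r g * (g p.1 * g p.2 * (g p'.1 * g p'.2))
      = (if p' = p then 1 else 0) + (if p' = p.swap then 1 else 0) := by
  obtain ⟨a, b⟩ := p
  obtain ⟨c, e⟩ := p'
  dsimp only at hp hp' ⊢
  have hsq := fun g (hg : g ∈ signVectors d) => mul_self_eq_one_of_mem_signVectors hg
  have reduce : ∀ {F : (Fin d → ℝ) → ℝ} {u v : Fin d}, u ≠ v →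
      (∀ g ∈ signVectors d, F g = g u * g v) → ∑ g ∈ signVectors d, r g * F g = 0 :=
    fun huv hF => (sum_congr rfl fun g hg => by rw [hF g hg]).trans (hr2 _ _ huv)
  simp only [Prod.swap_prod_mk, Prod.mk.injEq]
  by_cases hab : c = a ∧ e = b
  · obtain ⟨rfl, rfl⟩ := hab
    rw [sum_congr rfl fun g hg => show r g * _ = r g by
      linear_combination r g * (g e * g e) * hsq g hg c + r g * hsq g hg e, hr1]
    simp [hp']
  by_cases hba : c = b ∧ e = a
  · obtain ⟨rfl, rfl⟩ := hba
    rw [sum_congr rfl fun g hg => show r g * _ = r g by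
      linear_combination r g * (g e * g e) * hsq g hg c + r g * hsq g hg e, hr1]
    simp [hp']
  -- cancelling a repeated index by `σ_i² = 1` leaves two or four distinct signs
  rw [if_neg hab, if_neg hba, add_zero]
  rcases eq_or_ne c a with rfl | hca
  · exact reduce (fun h => hab ⟨rfl, h.symm⟩) fun g hg => by
      linear_combination (g b * g e) * hsq g hg c
  rcases eq_or_ne c b with rfl | hcb
  · exact reduce (fun h => hba ⟨rfl, h.symm⟩) fun g hg => by
      linear_combination (g a * g e) * hsq g hg c
  rcases eq_or_ne e a with rfl | hea
  · exact reduce hcb.symm fun g hg => by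
      linear_combination (g b * g c) * hsq g hg e
  rcases eq_or_ne e b with rfl | heb
  · exact reduce hca.symm fun g hg => by
      linear_combination (g a * g c) * hsq g hg e
  exact hr4 a b c e hp hca.symm hea.symm hcb.symm heb.symm hp'

end SignMoments

noncomputable def sameBlock {d : ℕ} (m : ℕ) (a b : Fin d) : ℝ :=
  if (a : ℕ) / m = b / m then 1 else 0

theorem sameBlock_comm {d m : ℕ} (a b : Fin d) : sameBlock m a b = sameBlock m b a := by
  simp only [sameBlock, eq_comm]

theorem sameBlock_mul_self {d m : ℕ} (a b : Fin d) :
    sameBlock m a b * sameBlock m a b = sameBlock m a b := by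
  unfold sameBlock; split_ifs <;> norm_num

noncomputable def sketchError {d : ℕ} (m : ℕ) (π : Equiv.Perm (Fin d)) (s x : Fin d → ℝ) : ℝ :=
  ∑ p ∈ (univ : Finset (Fin d)).offDiag,
    sameBlock m (π p.1) (π p.2) * (s p.1 * s p.2 * (x p.1 * x p.2))

theorem div_mul_sketchNormSq {d d' : ℕ} (hd : 0 < d) (hdvd : d' ∣ d) (π : Equiv.Perm (Fin d))
    {s : Fin d → ℝ} (hs : ∀ i, s i * s i = 1) (x : Fin d → ℝ) :
    (d / d' : ℝ) * sketchNormSq d d' π s x = ∑ i, x i ^ 2 + sketchError (d / d') π s x := by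
  have hd' : 0 < d' := Nat.pos_of_dvd_of_pos hdvd hd
  have hkey : ∀ i, (π i : ℕ) / (d / d') ∈ range d' := fun i =>
    mem_range.2 (Nat.div_lt_of_lt_mul (by rw [Nat.div_mul_cancel hdvd]; exact (π i).isLt))
  calc (d / d' : ℝ) * sketchNormSq d d' π s x
      = (d / d' : ℝ) * (d' / d) *
          ∑ r ∈ range d', (∑ i with (π i : ℕ) / (d / d') = r, s i * x i) ^ 2 := by
        rw [sketchNormSq, Fin.sum_univ_eq_sum_range (fun r => (√((d' : ℝ) / d) *
          ∑ i with (π i : ℕ) / (d / d') = r, s i * x i) ^ 2)]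
        simp only [mul_pow, Real.sq_sqrt (by positivity : (0 : ℝ) ≤ d' / d)]
        rw [← mul_sum, mul_assoc]
    _ = ∑ i, ∑ j, if (π i : ℕ) / (d / d') = (π j : ℕ) / (d / d')
          then s i * x i * (s j * x j) else 0 := by
        rw [div_mul_div_comm, mul_comm (d : ℝ), div_self (by positivity), one_mul,
          sum_sq_sum_filter_eq hkey]
    _ = ∑ i, x i ^ 2 + sketchError (d / d') π s x := by
        rw [sum_sum_eq_sum_add_sum_offDiag]
        congr 1
        · exact sum_congr rfl fun i _ => by
            rw [if_pos rfl]; linear_combination x i ^ 2 * hs i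
        · exact sum_congr rfl fun p _ => by
            unfold sameBlock; split_ifs <;> ring

theorem abs_sqrt_mul_sqrt_sketchNormSq_sub_one_le {d d' : ℕ} (hd : 0 < d) (hdvd : d' ∣ d)
    (π : Equiv.Perm (Fin d)) {s x : Fin d → ℝ} (hs : s ∈ signVectors d)
    (hx : ∑ i, x i ^ 2 = 1) :
    |√(d / d' : ℝ) * √(sketchNormSq d d' π s x) - 1| ≤ |sketchError (d / d') π s x| := by
  have hY := div_mul_sketchNormSq hd hdvd π (mul_self_eq_one_of_mem_signVectors hs) x
  have hnonneg : 0 ≤ (d / d' : ℝ) * sketchNormSq d d' π s x :=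
    mul_nonneg (by positivity) (sum_nonneg fun _ _ => sq_nonneg _)
  rw [← Real.sqrt_mul (by positivity)]
  simpa [hY, hx] using abs_sqrt_sub_one_le hnonneg

theorem sum_mul_sketchError_sq {d : ℕ} (m : ℕ) (q : Equiv.Perm (Fin d) → ℝ)
    {r : (Fin d → ℝ) → ℝ}
    (hwick : ∀ p p' : Fin d × Fin d, p.1 ≠ p.2 → p'.1 ≠ p'.2 →
      ∑ g ∈ signVectors d, r g * (g p.1 * g p.2 * (g p'.1 * g p'.2))
        = (if p' = p then 1 else 0) + (if p' = p.swap then 1 else 0))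
    (x : Fin d → ℝ) :
    ∑ π, ∑ g ∈ signVectors d, q π * r g * sketchError m π g x ^ 2
      = 2 * ∑ p ∈ (univ : Finset (Fin d)).offDiag,
          (∑ π, q π * sameBlock m (π p.1) (π p.2)) * (x p.1 * x p.2) ^ 2 := by
  set E : Fin d × Fin d → Fin d × Fin d → ℝ :=
    fun p p' => ∑ π, q π * (sameBlock m (π p.1) (π p.2) * sameBlock m (π p'.1) (π p'.2))
  calc ∑ π, ∑ g ∈ signVectors d, q π * r g * sketchError m π g x ^ 2
      = ∑ p ∈ (univ : Finset (Fin d)).offDiag, ∑ p' ∈ (univ : Finset (Fin d)).offDiag,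
          E p p' * ((if p' = p then 1 else 0) + (if p' = p.swap then 1 else 0)) *
            (x p.1 * x p.2 * (x p'.1 * x p'.2)) := by
        simp only [sketchError]
        rw [sum_sum_mul_mul_sq]
        refine sum_congr rfl fun p hp => sum_congr rfl fun p' hp' => ?_
        rw [mul_assoc, ← hwick p p' (mem_offDiag.1 hp).2.2 (mem_offDiag.1 hp').2.2,
          sum_mul (signVectors d)]
        congr 1
        exact sum_congr rfl fun g _ => by ring
    _ = ∑ p ∈ (univ : Finset (Fin d)).offDiag,
          (E p p * (x p.1 * x p.2) ^ 2 + E p p.swap * (x p.1 * x p.2) ^ 2) := by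
        refine sum_congr rfl fun p hp => ?_
        have hswap : p.swap ∈ (univ : Finset (Fin d)).offDiag := by
          simpa [mem_offDiag, eq_comm] using hp
        simp only [mul_add, add_mul, sum_add_distrib, mul_ite, ite_mul, mul_one, mul_zero,
          zero_mul, sum_ite_eq', hp, hswap, if_true, Prod.fst_swap, Prod.snd_swap]
        ring
    _ = _ := by
        rw [mul_sum]
        refine sum_congr rfl fun p _ => ?_
        have hcomm : ∀ π : Equiv.Perm (Fin d),
            sameBlock m (π p.2) (π p.1) = sameBlock m (π p.1) (π p.2) :=
          fun π => sameBlock_comm _ _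
        simp only [E, Prod.fst_swap, Prod.snd_swap, hcomm, sameBlock_mul_self]
        ring


section RandomPermutationsAndSigns

variable {Ω : Type*} [MeasurableSpace Ω] (ℙ : Measure Ω) {d : ℕ}

def IsTwoWiseIndependentPerm (h : Ω → Equiv.Perm (Fin d)) : Prop :=
  ∀ i j a b : Fin d, i ≠ j → a ≠ b →
    ℙ.real {ω | h ω i = a ∧ h ω j = b} = 1 / ((d : ℝ) * ((d : ℝ) - 1))

def IsFourWiseUniformSigns (σ : Ω → Fin d → ℝ) : Prop :=
  ∀ i₁ i₂ i₃ i₄ : Fin d, i₁ ≠ i₂ → i₁ ≠ i₃ → i₁ ≠ i₄ → i₂ ≠ i₃ → i₂ ≠ i₄ → i₃ ≠ i₄ →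
    ∀ s₁ s₂ s₃ s₄ : ℝ, (s₁ = 1 ∨ s₁ = -1) → (s₂ = 1 ∨ s₂ = -1) →
      (s₃ = 1 ∨ s₃ = -1) → (s₄ = 1 ∨ s₄ = -1) →
      ℙ.real {ω | σ ω i₁ = s₁ ∧ σ ω i₂ = s₂ ∧ σ ω i₃ = s₃ ∧ σ ω i₄ = s₄} = 1 / 16

variable [IsProbabilityMeasure ℙ] {h : Ω → Equiv.Perm (Fin d)} {σ : Ω → Fin d → ℝ}

theorem sum_measureReal_perm_mul_sameBlock_le {d' : ℕ} (hdvd : d' ∣ d)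
    (hmeash : ∀ π, MeasurableSet {ω | h ω = π}) (hperm : IsTwoWiseIndependentPerm ℙ h)
    {i j : Fin d} (hij : i ≠ j) :
    ∑ π, ℙ.real {ω | h ω = π} * sameBlock (d / d') (π i) (π j) ≤ 1 / d' := by
  have hd : 2 ≤ d := by
    have := Fin.val_ne_of_ne hij; have := i.isLt; have := j.isLt; omega
  have hd' : 0 < d' := Nat.pos_of_dvd_of_pos hdvd (by omega)
  have hm : 0 < d / d' := Nat.div_pos (Nat.le_of_dvd (by omega) hdvd) hd'
  have hdm : (d : ℝ) = d' * (d / d' : ℕ) := by exact_mod_cast (Nat.mul_div_cancel' hdvd).symm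
  have hcard := card_offDiag_filter_div_eq_le d hm
  rw [sum_measureReal_fiber_mul ℙ (S := univ) (T := univ.offDiag)
    (k := fun π : Equiv.Perm (Fin d) => (π i, π j)) (fun _ => mem_univ _)
    (fun π _ => by simpa [mem_offDiag] using π.injective.ne hij) hmeash
    (fun t => sameBlock (d / d') t.1 t.2)]
  calc ∑ t ∈ univ.offDiag, ℙ.real {ω | (h ω i, h ω j) = t} * sameBlock (d / d') t.1 t.2
      = (∑ t ∈ univ.offDiag, sameBlock (d / d') t.1 t.2) / ((d : ℝ) * ((d : ℝ) - 1)) := by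
        rw [sum_div]
        refine sum_congr rfl fun t ht => ?_
        simp only [Prod.ext_iff]
        rw [hperm i j t.1 t.2 hij (mem_offDiag.1 ht).2.2]
        ring
    _ ≤ (d * (d / d' - 1) : ℕ) / ((d : ℝ) * ((d : ℝ) - 1)) := by
        gcongr
        · have : (2 : ℝ) ≤ d := by exact_mod_cast hd
          nlinarith
        · simp only [sameBlock, sum_boole]
          exact_mod_cast hcard
    _ ≤ 1 / d' := by
        have : (2 : ℝ) ≤ d := by exact_mod_cast hd
        rw [div_le_div_iff₀ (by nlinarith) (by positivity), Nat.cast_mul, Nat.cast_sub hm,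
          Nat.cast_one]
        have : (1 : ℝ) ≤ d' := by exact_mod_cast hd'
        nlinarith

theorem sum_measureReal_signVectors (hmeasσ : ∀ g, MeasurableSet {ω | σ ω = g})
    (hσval : ∀ ω i, σ ω i = 1 ∨ σ ω i = -1) :
    ∑ g ∈ signVectors d, ℙ.real {ω | σ ω = g} = 1 := by
  simpa using (measureReal_setOf_eq_sum ℙ (fun ω => mem_signVectors.2 (hσval ω)) hmeasσ
    fun _ => True).symm

theorem sum_measureReal_sign_mul_eq_sum_div (hmeasσ : ∀ g, MeasurableSet {ω | σ ω = g})
    (hσval : ∀ ω i, σ ω i = 1 ∨ σ ω i = -1)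
    (hσ4 : IsFourWiseUniformSigns ℙ σ)
    {i₁ i₂ i₃ i₄ : Fin d} (h₁₂ : i₁ ≠ i₂) (h₁₃ : i₁ ≠ i₃) (h₁₄ : i₁ ≠ i₄) (h₂₃ : i₂ ≠ i₃)
    (h₂₄ : i₂ ≠ i₄) (h₃₄ : i₃ ≠ i₄) (φ : ℝ → ℝ → ℝ → ℝ → ℝ) :
    ∑ g ∈ signVectors d, ℙ.real {ω | σ ω = g} * φ (g i₁) (g i₂) (g i₃) (g i₄)
      = (∑ s₁ ∈ {1, -1}, ∑ s₂ ∈ {1, -1}, ∑ s₃ ∈ {1, -1}, ∑ s₄ ∈ ({1, -1} : Finset ℝ),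
          φ s₁ s₂ s₃ s₄) / 16 := by
  have hpm : ∀ s ∈ ({1, -1} : Finset ℝ), s = 1 ∨ s = -1 := by simp
  set pm : Finset ℝ := {1, -1}
  rw [sum_measureReal_fiber_mul ℙ (T := pm ×ˢ pm ×ˢ pm ×ˢ pm)
    (k := fun g => (g i₁, g i₂, g i₃, g i₄)) (fun ω => mem_signVectors.2 (hσval ω))
    (fun g hg => by simp [pm, mem_signVectors.1 hg]) hmeasσ
    (fun t => φ t.1 t.2.1 t.2.2.1 t.2.2.2)]
  simp only [sum_product, sum_div, Prod.mk.injEq]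
  refine sum_congr rfl fun s₁ h₁ => sum_congr rfl fun s₂ h₂ =>
    sum_congr rfl fun s₃ h₃ => sum_congr rfl fun s₄ h₄ => ?_
  rw [hσ4 i₁ i₂ i₃ i₄ h₁₂ h₁₃ h₁₄ h₂₃ h₂₄ h₃₄ s₁ s₂ s₃ s₄ (hpm s₁ h₁) (hpm s₂ h₂) (hpm s₃ h₃)
    (hpm s₄ h₄)]
  ring

theorem sum_measureReal_sign_moment_four (hd : 4 ≤ d)
    (hmeasσ : ∀ g, MeasurableSet {ω | σ ω = g}) (hσval : ∀ ω i, σ ω i = 1 ∨ σ ω i = -1)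
    (hσ4 : IsFourWiseUniformSigns ℙ σ)
    {p p' : Fin d × Fin d} (hp : p.1 ≠ p.2) (hp' : p'.1 ≠ p'.2) :
    ∑ g ∈ signVectors d, ℙ.real {ω | σ ω = g} * (g p.1 * g p.2 * (g p'.1 * g p'.2))
      = (if p' = p then 1 else 0) + (if p' = p.swap then 1 else 0) := by
  refine sum_mul_sign_moment_four (sum_measureReal_signVectors ℙ hmeasσ hσval)
    (fun a b hab => ?_) (fun a b c e hab hac hae hbc hbe hce => ?_) hp hp'
  · obtain ⟨e, f, hef, hae, haf, hbe, hbf⟩ := exists_pair_ne_of_four_le hd a b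
    rw [sum_measureReal_sign_mul_eq_sum_div ℙ hmeasσ hσval hσ4 hab hae haf hbe hbf hef
      fun s₁ s₂ _ _ => s₁ * s₂]
    norm_num
  · rw [sum_measureReal_sign_mul_eq_sum_div ℙ hmeasσ hσval hσ4 hab hac hae hbc hbe hce
      fun s₁ s₂ s₃ s₄ => s₁ * s₂ * (s₃ * s₄)]
    norm_num

theorem sum_mul_sketchError_sq_le {d' : ℕ} (hdvd : d' ∣ d) (hd : 4 ≤ d)
    (hmeash : ∀ π, MeasurableSet {ω | h ω = π}) (hperm : IsTwoWiseIndependentPerm ℙ h)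
    (hmeasσ : ∀ g, MeasurableSet {ω | σ ω = g}) (hσval : ∀ ω i, σ ω i = 1 ∨ σ ω i = -1)
    (hσ4 : IsFourWiseUniformSigns ℙ σ) (x : Fin d → ℝ) :
    ∑ π, ∑ g ∈ signVectors d,
        ℙ.real {ω | h ω = π} * ℙ.real {ω | σ ω = g} * sketchError (d / d') π g x ^ 2
      ≤ 2 / d' * (∑ i, x i ^ 2) ^ 2 := by
  rw [sum_mul_sketchError_sq _ _
    (fun p p' hp hp' => sum_measureReal_sign_moment_four ℙ hd hmeasσ hσval hσ4 hp hp') x]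
  calc 2 * ∑ p ∈ (univ : Finset (Fin d)).offDiag,
        (∑ π, ℙ.real {ω | h ω = π} * sameBlock (d / d') (π p.1) (π p.2)) * (x p.1 * x p.2) ^ 2
      ≤ 2 * (1 / d' * (∑ i, x i ^ 2) ^ 2) := by
        gcongr
        exact sum_offDiag_mul_sq_le (by positivity) (fun p hp =>
          sum_measureReal_perm_mul_sameBlock_le ℙ hdvd hmeash hperm (mem_offDiag.1 hp).2.2) x
    _ = 2 / d' * (∑ i, x i ^ 2) ^ 2 := by ring

end RandomPermutationsAndSigns

theorem countSketch_distortion_prob_general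
    (d d' : ℕ) (hdvd : d' ∣ d)
    {Ω : Type*} [MeasurableSpace Ω] (ℙ : Measure Ω) [IsProbabilityMeasure ℙ]
    (h : Ω → Equiv.Perm (Fin d)) (σ : Ω → Fin d → ℝ)
    (hmeash : ∀ π : Equiv.Perm (Fin d), MeasurableSet {ω | h ω = π})
    (hmeasσ : ∀ g : Fin d → ℝ, MeasurableSet {ω | σ ω = g})
    (hperm : ∀ i j a b : Fin d, i ≠ j → a ≠ b →
      (ℙ {ω | h ω i = a ∧ h ω j = b}).toReal = 1 / ((d : ℝ) * ((d : ℝ) - 1)))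
    (hσval : ∀ ω i, σ ω i = 1 ∨ σ ω i = -1)
    (hσ4 : ∀ i₁ i₂ i₃ i₄ : Fin d,
      i₁ ≠ i₂ → i₁ ≠ i₃ → i₁ ≠ i₄ → i₂ ≠ i₃ → i₂ ≠ i₄ → i₃ ≠ i₄ →
      ∀ s₁ s₂ s₃ s₄ : ℝ, (s₁ = 1 ∨ s₁ = -1) → (s₂ = 1 ∨ s₂ = -1) →
        (s₃ = 1 ∨ s₃ = -1) → (s₄ = 1 ∨ s₄ = -1) →
        (ℙ {ω | σ ω i₁ = s₁ ∧ σ ω i₂ = s₂ ∧ σ ω i₃ = s₃ ∧ σ ω i₄ = s₄}).toReal = 1 / 16)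
    (hind : ∀ (π : Equiv.Perm (Fin d)) (g : Fin d → ℝ),
      (ℙ {ω | h ω = π ∧ σ ω = g}).toReal
        = (ℙ {ω | h ω = π}).toReal * (ℙ {ω | σ ω = g}).toReal)
    (hd16 : 16 ≤ d')
    (x : Fin d → ℝ) (hx : Real.sqrt (∑ i, (x i) ^ 2) = 1) :
    (ℙ {ω | |Real.sqrt ((d : ℝ) / (d' : ℝ)) *
        Real.sqrt (sketchNormSq d d' (h ω) (σ ω) x) - 1| > 4 / Real.sqrt (d' : ℝ)}).toReal
      < 1 / 2 := by
  have hx2 : ∑ i, x i ^ 2 = 1 := Real.sqrt_eq_one.mp hx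
  have hd : 0 < d := Nat.pos_of_ne_zero (by rintro rfl; simp at hx2)
  have hd'pos : (0 : ℝ) < d' := by positivity
  set ε := 4 / √(d' : ℝ)
  have hε2 : ε ^ 2 = 16 / d' := by rw [div_pow, Real.sq_sqrt hd'pos.le]; norm_num
  set bad := fun y : Equiv.Perm (Fin d) × (Fin d → ℝ) =>
    |√(d / d' : ℝ) * √(sketchNormSq d d' y.1 y.2 x) - 1| > ε
  calc ℙ.real {ω | bad (h ω, σ ω)}
      = ∑ y ∈ univ ×ˢ signVectors d with bad y,
          ℙ.real {ω | h ω = y.1} * ℙ.real {ω | σ ω = y.2} :=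
        measureReal_setOf_prod_eq_sum ℙ (fun ω => mem_signVectors.2 (hσval ω)) hmeash hmeasσ
          hind bad
    _ ≤ (∑ y ∈ univ ×ˢ signVectors d, ℙ.real {ω | h ω = y.1} * ℙ.real {ω | σ ω = y.2} *
          sketchError (d / d') y.1 y.2 x ^ 2) / ε ^ 2 :=
        sum_filter_le_sum_mul_sq_div bad (by positivity) (fun _ _ => by positivity)
          fun y hy hbad => hbad.le.trans
            (abs_sqrt_mul_sqrt_sketchNormSq_sub_one_le hd hdvd y.1 (mem_product.1 hy).2 hx2)
    _ ≤ 2 / d' / (16 / d') := by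
        rw [hε2, sum_product]
        gcongr
        simpa [hx2] using sum_mul_sketchError_sq_le ℙ hdvd
          ((Nat.le_of_dvd hd hdvd).trans' (by omega)) hmeash hperm hmeasσ hσval hσ4 x
    _ < 1 / 2 := by rw [div_div_div_cancel_right₀ hd'pos.ne']; norm_num

/-- For `d' ≥ 16` and `ε := 4/√d'`, with `h` a 2-wise independent random permutation, `σ`
4-wise independent uniform random signs, `h` and `σ` independent, and any unit vector `x`,
`ℙ(|√(d/d')·‖A_{h,σ}x‖₂ − 1| > ε) < 1/2`. -/
theorem countSketch_distortion_prob
    (d d' : ℕ) (hd' : 0 < d') (hdvd : d' ∣ d)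
    {Ω : Type*} [MeasurableSpace Ω] (ℙ : Measure Ω) [IsProbabilityMeasure ℙ]
    (h : Ω → Equiv.Perm (Fin d)) (σ : Ω → Fin d → ℝ)
    (hmeash : ∀ π : Equiv.Perm (Fin d), MeasurableSet {ω | h ω = π})
    (hmeasσ : ∀ g : Fin d → ℝ, MeasurableSet {ω | σ ω = g})
    (hperm : ∀ i j a b : Fin d, i ≠ j → a ≠ b →
      (ℙ {ω | h ω i = a ∧ h ω j = b}).toReal = 1 / ((d : ℝ) * ((d : ℝ) - 1)))
    (hσval : ∀ ω i, σ ω i = 1 ∨ σ ω i = -1)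
    (hσ4 : ∀ i₁ i₂ i₃ i₄ : Fin d,
      i₁ ≠ i₂ → i₁ ≠ i₃ → i₁ ≠ i₄ → i₂ ≠ i₃ → i₂ ≠ i₄ → i₃ ≠ i₄ →
      ∀ s₁ s₂ s₃ s₄ : ℝ, (s₁ = 1 ∨ s₁ = -1) → (s₂ = 1 ∨ s₂ = -1) →
        (s₃ = 1 ∨ s₃ = -1) → (s₄ = 1 ∨ s₄ = -1) →
        (ℙ {ω | σ ω i₁ = s₁ ∧ σ ω i₂ = s₂ ∧ σ ω i₃ = s₃ ∧ σ ω i₄ = s₄}).toReal = 1 / 16)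
    (hind : ∀ (π : Equiv.Perm (Fin d)) (g : Fin d → ℝ),
      (ℙ {ω | h ω = π ∧ σ ω = g}).toReal
        = (ℙ {ω | h ω = π}).toReal * (ℙ {ω | σ ω = g}).toReal)
    (hd16 : 16 ≤ d')
    (x : Fin d → ℝ) (hx : Real.sqrt (∑ i, (x i) ^ 2) = 1) :
    (ℙ {ω | |Real.sqrt ((d : ℝ) / (d' : ℝ)) *
        Real.sqrt (sketchNormSq d d' (h ω) (σ ω) x) - 1| > 4 / Real.sqrt (d' : ℝ)}).toReal
      < 1 / 2 :=
  countSketch_distortion_prob_general d d' hdvd ℙ h σ hmeash hmeasσ hperm hσval hσ4 hind hd16 x hx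
end

section
/- There exists a universal constant K such that for every ε with 0 < ε < 1/2 and all powers of two d and d' with d' dividing d and d' ≥ K/ε², there exists a finite collection 𝒫 of orthogonal decompositions of ℝ^d into ℝ^{d'} with |𝒫| ≤ d^{K·d/d'}, such that for every x ∈ ℝ^d with ‖x‖₂ = 1 there exists a decomposition {P_i} ∈ 𝒫 satisfying |√(d/d') · ‖P_i x‖₂ − 1| < ε for every i = 1, …, d/d'. -/
/-- `{P_i}_{i=1}^{d/d'}` is an orthogonal decomposition of `ℝ^d` into `ℝ^{d'}` if the set of all
row vectors of the `P_i` forms an orthonormal basis of `ℝ^d` (equivalently, since there are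
exactly `(d/d')·d' = d` rows, the rows are pairwise orthonormal). -/
def IsOrthDecomp (d d' : ℕ) (P : Fin (d / d') → Matrix (Fin d') (Fin d) ℝ) : Prop :=
  ∀ (i : Fin (d / d')) (a : Fin d') (j : Fin (d / d')) (b : Fin d'),
    (∑ t, P i a t * P j b t) = if i = j ∧ a = b then 1 else 0

/-!
Halve recursively. Pair the basis vectors spanning one half with those spanning the other and
rotate every pair by a common angle `θ`: the squared norms of the components of `x` in the two
rotated halves add up to `‖x‖²` and are exchanged as `θ` runs from `0` to `π/2`, so some `θ`
balances them exactly, and the grid angle `r π / (2N)` just below it balances them up to a factor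
`1 ± π/N`. Recursing `k = log₂ (d/d')` times, with independent choices in the two halves, gives at
most `(N + 1)^(2^k)` decompositions, and every block of the chosen one has norm within a factor
`(1 + π/N)^k` of `‖x‖ / √(2^k)`. The choice `N = d³` gives the theorem with `K = 4`.

The construction is carried out for orthonormal families `w` in any real inner product space; the
coordinates of `x` are then the inner products `⟪w p, x⟫` (`innerCoeffs w x`).
-/

open Real Finset
open scoped RealInnerProductSpace Matrix

lemma add_le_sqrt_two_mul_sqrt_sq_add_sq (a b : ℝ) : a + b ≤ √2 * √(a ^ 2 + b ^ 2) := by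
  rw [← Real.sqrt_mul zero_le_two]
  exact Real.le_sqrt_of_sq_le (by nlinarith [sq_nonneg (a - b)])

lemma abs_mul_sub_le_of_abs_sub_le {A a S l s t : ℝ} (hl : 0 ≤ l) (hs : 0 ≤ s)
    (hA : |A - a| ≤ s * a) (ha : |l * a - S| ≤ t * S) :
    |l * A - S| ≤ ((1 + s) * (1 + t) - 1) * S := by
  have hla : l * a ≤ (1 + t) * S := by linarith [(abs_le.mp ha).2]
  calc |l * A - S| = |l * (A - a) + (l * a - S)| := by ring_nf
    _ ≤ l * (s * a) + t * S := by
        refine (abs_add_le _ _).trans (add_le_add ?_ ha)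
        rw [abs_mul, abs_of_nonneg hl]
        exact mul_le_mul_of_nonneg_left hA hl
    _ ≤ s * ((1 + t) * S) + t * S := by nlinarith
    _ = ((1 + s) * (1 + t) - 1) * S := by ring

lemma one_add_pow_sub_one_lt {ε δ : ℝ} {k : ℕ} (hε : 0 < ε) (hε₁ : ε ≤ 1) (hδ : 0 ≤ δ)
    (hkδ : k * δ ≤ ε / 2) : (1 + δ) ^ k - 1 < ε := by
  have h₁ : (1 + δ) ^ k ≤ exp (k * δ) := by
    rw [Real.exp_nat_mul]
    exact pow_le_pow_left₀ (by linarith) (by linarith [add_one_le_exp δ]) k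
  have h₂ : exp (ε / 2) < 1 / (1 - ε / 2) :=
    exp_bound_div_one_sub_of_interval' (by positivity) (by linarith)
  have h₃ : 1 / (1 - ε / 2) ≤ 1 + ε := by
    rw [div_le_iff₀ (by linarith)]
    nlinarith
  linarith [exp_le_exp.mpr hkδ]

lemma card_biUnion_image_product_mul_le {β γ δ : Type*} [DecidableEq δ] {n B : ℕ}
    (G₀ : ℕ → Finset β) (G₁ : ℕ → Finset γ) (f : β × γ → δ)
    (h₀ : ∀ r, (G₀ r).card * (n + 1) ≤ B) (h₁ : ∀ r, (G₁ r).card * (n + 1) ≤ B) :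
    ((range (n + 1)).biUnion fun r => (G₀ r ×ˢ G₁ r).image f).card * (n + 1) ≤ B ^ 2 := by
  refine Nat.le_of_mul_le_mul_right ?_ n.succ_pos
  calc ((range (n + 1)).biUnion fun r => (G₀ r ×ˢ G₁ r).image f).card * (n + 1) * (n + 1)
      ≤ (∑ r ∈ range (n + 1), (G₀ r).card * (G₁ r).card) * (n + 1) * (n + 1) := by
        gcongr
        exact card_biUnion_le.trans
          (sum_le_sum fun r _ => card_image_le.trans (card_product _ _).le)
    _ = ∑ r ∈ range (n + 1), (G₀ r).card * (n + 1) * ((G₁ r).card * (n + 1)) := by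
        rw [sum_mul, sum_mul]
        exact sum_congr rfl fun r _ => by ring
    _ ≤ ∑ _r ∈ range (n + 1), B * B := sum_le_sum fun r _ => Nat.mul_le_mul (h₀ r) (h₁ r)
    _ = B ^ 2 * (n + 1) := by rw [sum_const, card_range, smul_eq_mul]; ring

section Rotation

variable {E : Type*} [NormedAddCommGroup E] [InnerProductSpace ℝ E]

noncomputable def rot (u v : E) (θ : ℝ) : E := cos θ • u + sin θ • v

lemma norm_sq_rot (u v : E) (θ : ℝ) :
    ‖rot u v θ‖ ^ 2 = cos θ ^ 2 * ‖u‖ ^ 2 + 2 * (cos θ * sin θ) * ⟪u, v⟫ + sin θ ^ 2 * ‖v‖ ^ 2 := by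
  rw [rot, norm_add_sq_real, norm_smul, norm_smul, real_inner_smul_left, real_inner_smul_right,
    Real.norm_eq_abs, Real.norm_eq_abs, mul_pow, mul_pow, sq_abs, sq_abs]
  ring

lemma norm_sq_rot_add_norm_sq_rot_add_pi_div_two (u v : E) (θ : ℝ) :
    ‖rot u v θ‖ ^ 2 + ‖rot u v (θ + π / 2)‖ ^ 2 = ‖u‖ ^ 2 + ‖v‖ ^ 2 := by
  rw [norm_sq_rot, norm_sq_rot, cos_add_pi_div_two, sin_add_pi_div_two]
  linear_combination (‖u‖ ^ 2 + ‖v‖ ^ 2) * sin_sq_add_cos_sq θ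

lemma rot_add_pi (u v : E) (θ : ℝ) : rot u v (θ + π) = -rot u v θ := by
  simp only [rot, cos_add_pi, sin_add_pi, neg_smul, neg_add]

lemma abs_norm_rot_sub_norm_rot_le (u v : E) (θ φ : ℝ) :
    |‖rot u v θ‖ - ‖rot u v φ‖| ≤ |θ - φ| * (‖u‖ + ‖v‖) :=
  calc |‖rot u v θ‖ - ‖rot u v φ‖| ≤ ‖rot u v θ - rot u v φ‖ := abs_norm_sub_norm_le _ _
    _ = ‖(cos θ - cos φ) • u + (sin θ - sin φ) • v‖ := by
        congr 1; simp only [rot, sub_smul]; abel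
    _ ≤ |cos θ - cos φ| * ‖u‖ + |sin θ - sin φ| * ‖v‖ := by
        refine (norm_add_le _ _).trans ?_
        rw [norm_smul, norm_smul, Real.norm_eq_abs, Real.norm_eq_abs]
    _ ≤ |θ - φ| * (‖u‖ + ‖v‖) := by
        rw [mul_add]
        exact add_le_add (mul_le_mul_of_nonneg_right (abs_cos_sub_cos_le θ φ) (norm_nonneg u))
          (mul_le_mul_of_nonneg_right (abs_sin_sub_sin_le θ φ) (norm_nonneg v))

lemma exists_norm_rot_eq_norm_rot_add_pi_div_two (u v : E) :
    ∃ θ ∈ Set.Icc 0 (π / 2), ‖rot u v θ‖ = ‖rot u v (θ + π / 2)‖ := by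
  set g : ℝ → ℝ := fun θ => ‖rot u v θ‖ ^ 2 - ‖rot u v (θ + π / 2)‖ ^ 2
  have hg : ContinuousOn g (Set.uIcc 0 (π / 2)) := by
    refine Continuous.continuousOn ?_
    simp only [g, rot]
    fun_prop
  have hg_end : g (π / 2) = -g 0 := by
    have : π / 2 + π / 2 = 0 + π := by ring
    simp only [g]
    rw [this, rot_add_pi, norm_neg, zero_add]
    ring
  obtain ⟨θ, hθ, hgθ⟩ : (0 : ℝ) ∈ g '' Set.uIcc 0 (π / 2) := by
    refine intermediate_value_uIcc hg ?_
    rw [hg_end, Set.mem_uIcc]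
    rcases le_total 0 (g 0) with h | h
    · exact Or.inr ⟨by linarith, h⟩
    · exact Or.inl ⟨h, by linarith⟩
  rw [Set.uIcc_of_le (by positivity)] at hθ
  exact ⟨θ, hθ, (pow_left_inj₀ (norm_nonneg _) (norm_nonneg _) two_ne_zero).mp
    (sub_eq_zero.mp hgθ)⟩

lemma exists_grid_rot_balanced (u v : E) {N : ℕ} (hN : 0 < N) :
    ∃ r ∈ range (N + 1), ∀ c : Fin 2,
      |√2 * ‖rot u v (r * (π / (2 * N)) + c * (π / 2))‖ - √(‖u‖ ^ 2 + ‖v‖ ^ 2)|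
        ≤ π / N * √(‖u‖ ^ 2 + ‖v‖ ^ 2) := by
  obtain ⟨θ, ⟨hθ0, hθπ⟩, hθ⟩ := exists_norm_rot_eq_norm_rot_add_pi_div_two u v
  set S := √(‖u‖ ^ 2 + ‖v‖ ^ 2)
  have hbalanced : ∀ c : Fin 2, √2 * ‖rot u v (θ + c * (π / 2))‖ = S := by
    have key : √2 * ‖rot u v θ‖ = S := by
      rw [← Real.sqrt_sq (norm_nonneg (rot u v θ)), ← Real.sqrt_mul zero_le_two]
      congr 1
      rw [← norm_sq_rot_add_norm_sq_rot_add_pi_div_two u v θ, ← hθ]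
      ring
    intro c
    fin_cases c
    · simpa using key
    · simpa [← hθ] using key
  set h := π / (2 * N)
  have hh : 0 < h := by positivity
  set r := ⌊θ / h⌋₊
  have hr_le : r * h ≤ θ := (le_div_iff₀ hh).mp (Nat.floor_le (by positivity))
  have hr_gt : θ < r * h + h := by
    have := Nat.lt_floor_add_one (θ / h)
    rw [div_lt_iff₀ hh] at this
    linarith
  refine ⟨r, mem_range.mpr (Nat.lt_succ_of_le (Nat.floor_le_of_le ?_)), fun c => ?_⟩
  · rw [div_le_iff₀ hh]
    calc θ ≤ π / 2 := hθπ
      _ = N * h := by simp only [h]; field_simp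
  calc |√2 * ‖rot u v (r * h + c * (π / 2))‖ - S|
      = √2 * |‖rot u v (r * h + c * (π / 2))‖ - ‖rot u v (θ + c * (π / 2))‖| := by
        rw [← hbalanced c, ← mul_sub, abs_mul, abs_of_pos (by positivity)]
    _ ≤ √2 * (h * (√2 * S)) := by
        gcongr
        refine (abs_norm_rot_sub_norm_rot_le u v _ _).trans ?_
        gcongr
        · rw [abs_le]; constructor <;> linarith
        · exact add_le_sqrt_two_mul_sqrt_sq_add_sq _ _
    _ = (√2 * √2) * h * S := by ring
    _ = π / N * S := by
        rw [Real.mul_self_sqrt zero_le_two]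
        simp only [h]
        field_simp

end Rotation

section Families

variable {E : Type*} [NormedAddCommGroup E] [InnerProductSpace ℝ E] {κ : Type*}

noncomputable def innerCoeffs [Fintype κ] (v : κ → E) (x : E) : EuclideanSpace ℝ κ :=
  WithLp.toLp 2 fun p => ⟪v p, x⟫

lemma innerCoeffs_rot [Fintype κ] (u v : κ → E) (θ : ℝ) (x : E) :
    innerCoeffs (fun p => rot (u p) (v p) θ) x = rot (innerCoeffs u x) (innerCoeffs v x) θ := by
  ext p
  simp [innerCoeffs, rot, inner_add_left, real_inner_smul_left]

lemma norm_innerCoeffs_comp_equiv [Fintype κ] {κ' : Type*} [Fintype κ'] (v : κ → E)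
    (e : κ' ≃ κ) (x : E) : ‖innerCoeffs (v ∘ e) x‖ = ‖innerCoeffs v x‖ := by
  simp only [EuclideanSpace.norm_eq, innerCoeffs, Function.comp_apply, Real.norm_eq_abs, sq_abs]
  rw [Equiv.sum_comp e fun p => ⟪v p, x⟫ ^ 2]

lemma norm_sq_innerCoeffs_prod [Fintype κ] {γ : Type*} [Fintype γ] (v : γ × κ → E) (x : E) :
    ‖innerCoeffs v x‖ ^ 2 = ∑ c, ‖innerCoeffs (fun p => v (c, p)) x‖ ^ 2 := by
  simp only [EuclideanSpace.real_norm_sq_eq, innerCoeffs, Fintype.sum_prod_type]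

/-- `rotFamily w θ (c, p)` is `w (c, p)` rotated by `θ` in the plane of `w (0, p)`, `w (1, p)`. -/
noncomputable def rotFamily (w : Fin 2 × κ → E) (θ : ℝ) : Fin 2 × κ → E :=
  fun q => rot (w (0, q.2)) (w (1, q.2)) (θ + q.1 * (π / 2))

lemma Orthonormal.rotFamily {w : Fin 2 × κ → E} (hw : Orthonormal ℝ w) (θ : ℝ) :
    Orthonormal ℝ (rotFamily w θ) := by
  classical
  rw [orthonormal_iff_ite] at hw ⊢
  rintro ⟨c, p⟩ ⟨c', p'⟩
  simp only [_root_.rotFamily, rot, inner_add_left, inner_add_right, real_inner_smul_left,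
    real_inner_smul_right, hw, Prod.mk.injEq]
  by_cases hp : p = p' <;> fin_cases c <;> fin_cases c' <;>
    simp [hp, cos_add_pi_div_two, sin_add_pi_div_two] <;>
    first | linear_combination sin_sq_add_cos_sq θ | ring

lemma rotFamily_mem {S : Submodule ℝ E} {w : Fin 2 × κ → E} (hw : ∀ q, w q ∈ S) (θ : ℝ)
    (q : Fin 2 × κ) : rotFamily w θ q ∈ S :=
  S.add_mem (S.smul_mem _ (hw _)) (S.smul_mem _ (hw _))

lemma Orthonormal.of_blocks {γ κ' : Type*} {B : γ × κ → E} (hB : Orthonormal ℝ B)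
    {V : γ × κ' → E} (hV : ∀ c, Orthonormal ℝ fun l => V (c, l))
    (hVB : ∀ c l, V (c, l) ∈ Submodule.span ℝ (Set.range fun p => B (c, p))) :
    Orthonormal ℝ V := by
  classical
  rw [orthonormal_iff_ite]
  rintro ⟨c, l⟩ ⟨c', l'⟩
  by_cases hc : c = c'
  · subst hc
    simp [orthonormal_iff_ite.mp (hV c)]
  · rw [if_neg (by simp [hc])]
    refine (Submodule.isOrtho_span.mpr ?_).inner_eq (hVB c l) (hVB c' l')
    rintro _ ⟨p, rfl⟩ _ ⟨p', rfl⟩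
    exact hB.2 (by simp [hc])

end Families

section Splitting

variable {E : Type*} [NormedAddCommGroup E] [InnerProductSpace ℝ E] {ι ι' α : Type*}

/-- The span condition is what lets splitting sets of orthogonal subspaces be combined
(`Orthonormal.of_blocks`). -/
def IsSplittingSet [Fintype ι] [Fintype α] (k : ℕ) (δ : ℝ) (w : ι × α → E)
    (F : Finset (ι × α → E)) : Prop :=
  (∀ v ∈ F, Orthonormal ℝ v ∧ ∀ p, v p ∈ Submodule.span ℝ (Set.range w)) ∧
    ∀ x : E, ∃ v ∈ F, ∀ i, |√2 ^ k * ‖innerCoeffs (fun a => v (i, a)) x‖ - ‖innerCoeffs w x‖|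
      ≤ ((1 + δ) ^ k - 1) * ‖innerCoeffs w x‖

lemma isSplittingSet_singleton [Fintype ι] [Fintype α] (hι : Fintype.card ι = 1) (δ : ℝ)
    {w : ι × α → E} (hw : Orthonormal ℝ w) : IsSplittingSet 0 δ w {w} := by
  have : Subsingleton ι := Fintype.card_le_one_iff_subsingleton.mp hι.le
  refine ⟨fun v hv => ?_, fun x => ⟨w, mem_singleton_self w, fun i => ?_⟩⟩
  · rw [mem_singleton.mp hv]
    exact ⟨hw, fun p => Submodule.subset_span (Set.mem_range_self p)⟩
  have hblock : ‖innerCoeffs (fun a => w (i, a)) x‖ = ‖innerCoeffs w x‖ := by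
    refine (pow_left_inj₀ (norm_nonneg _) (norm_nonneg _) two_ne_zero).mp ?_
    rw [norm_sq_innerCoeffs_prod, Fintype.sum_subsingleton _ i]
  simp [hblock]

def halvingEquiv (e : ι ≃ Fin 2 × ι') : ι × α ≃ Fin 2 × (ι' × α) :=
  (Equiv.prodCongr e (Equiv.refl α)).trans (Equiv.prodAssoc _ _ _)

def halves (e : ι ≃ Fin 2 × ι') (w : ι × α → E) : Fin 2 × (ι' × α) → E :=
  w ∘ (halvingEquiv e).symm

def glue (e : ι ≃ Fin 2 × ι') (v : Fin 2 → ι' × α → E) : ι × α → E :=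
  (fun q => v q.1 q.2) ∘ halvingEquiv e

lemma sqrt_norm_sq_halves_eq_norm_innerCoeffs [Fintype ι] [Fintype ι'] [Fintype α]
    (e : ι ≃ Fin 2 × ι') (w : ι × α → E) (x : E) :
    √(‖innerCoeffs (fun p => halves e w (0, p)) x‖ ^ 2 +
      ‖innerCoeffs (fun p => halves e w (1, p)) x‖ ^ 2) = ‖innerCoeffs w x‖ := by
  rw [← norm_innerCoeffs_comp_equiv w (halvingEquiv e).symm,
    ← Real.sqrt_sq (norm_nonneg (innerCoeffs (w ∘ (halvingEquiv e).symm) x)),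
    norm_sq_innerCoeffs_prod (w ∘ (halvingEquiv e).symm), Fin.sum_univ_two]
  rfl

lemma orthonormal_glue (e : ι ≃ Fin 2 × ι') {w : ι × α → E} (hw : Orthonormal ℝ w) (θ : ℝ)
    {v : Fin 2 → ι' × α → E}
    (hv : ∀ c, Orthonormal ℝ (v c) ∧
      ∀ p, v c p ∈ Submodule.span ℝ (Set.range fun p => rotFamily (halves e w) θ (c, p))) :
    Orthonormal ℝ (glue e v) ∧ ∀ p, glue e v p ∈ Submodule.span ℝ (Set.range w) := by
  refine ⟨((hw.comp _ (halvingEquiv e).symm.injective).rotFamily θ).of_blocks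
    (fun c => (hv c).1) (fun c p => (hv c).2 p) |>.comp _ (halvingEquiv e).injective, fun p => ?_⟩
  refine Submodule.span_le.mpr ?_ ((hv _).2 _)
  rintro _ ⟨q, rfl⟩
  exact rotFamily_mem (fun q => Submodule.subset_span (Set.mem_range_self _)) θ _

theorem exists_isSplittingSet_succ [Fintype ι] [Fintype ι'] [Fintype α] (e : ι ≃ Fin 2 × ι')
    {N : ℕ} (hN : 0 < N) {k B : ℕ}
    (ih : ∀ w' : ι' × α → E, Orthonormal ℝ w' →
      ∃ F : Finset (ι' × α → E), F.card * (N + 1) ≤ B ∧ IsSplittingSet k (π / N) w' F)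
    {w : ι × α → E} (hw : Orthonormal ℝ w) :
    ∃ F : Finset (ι × α → E), F.card * (N + 1) ≤ B ^ 2 ∧ IsSplittingSet (k + 1) (π / N) w F := by
  classical
  have hW : Orthonormal ℝ (halves e w) := hw.comp _ (halvingEquiv e).symm.injective
  set θ : ℕ → ℝ := fun r => r * (π / (2 * N))
  choose G hGcard hG using fun r (c : Fin 2) =>
    ih _ ((hW.rotFamily (θ r)).comp _ (Prod.mk_right_injective c))
  refine ⟨(range (N + 1)).biUnion fun r => (G r 0 ×ˢ G r 1).image fun v => glue e ![v.1, v.2],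
    ?_, fun v hv => ?_, fun x => ?_⟩
  · exact card_biUnion_image_product_mul_le (fun r => G r 0) (fun r => G r 1) _
      (fun r => hGcard r 0) (fun r => hGcard r 1)
  · simp only [mem_biUnion, mem_image, mem_product] at hv
    obtain ⟨r, -, ⟨v₀, v₁⟩, ⟨h₀, h₁⟩, rfl⟩ := hv
    refine orthonormal_glue e hw (θ r) (Fin.forall_fin_two.mpr ⟨?_, ?_⟩)
    exacts [(hG r 0).1 v₀ h₀, (hG r 1).1 v₁ h₁]
  set X : Fin 2 → EuclideanSpace ℝ (ι' × α) := fun c => innerCoeffs (fun p => halves e w (c, p)) x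
  obtain ⟨r, hr, hrot⟩ := exists_grid_rot_balanced (X 0) (X 1) hN
  obtain ⟨v₀, h₀, hv₀⟩ := (hG r 0).2 x
  obtain ⟨v₁, h₁, hv₁⟩ := (hG r 1).2 x
  refine ⟨glue e ![v₀, v₁], mem_biUnion.mpr ⟨r, hr, mem_image.mpr
    ⟨(v₀, v₁), mem_product.mpr ⟨h₀, h₁⟩, rfl⟩⟩, fun i => ?_⟩
  have hv : ∀ c i', |√2 ^ k * ‖innerCoeffs (fun a => ![v₀, v₁] c (i', a)) x‖
      - ‖rot (X 0) (X 1) (θ r + c * (π / 2))‖|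
        ≤ ((1 + π / N) ^ k - 1) * ‖rot (X 0) (X 1) (θ r + c * (π / 2))‖ := by
    refine Fin.forall_fin_two.mpr ⟨fun i' => ?_, fun i' => ?_⟩ <;> rw [← innerCoeffs_rot]
    exacts [hv₀ i', hv₁ i']
  rw [← sqrt_norm_sq_halves_eq_norm_innerCoeffs e w x, pow_succ', mul_assoc]
  refine (abs_mul_sub_le_of_abs_sub_le (Real.sqrt_nonneg 2) ?_ (hv (e i).1 (e i).2)
    (hrot _)).trans_eq (by ring)
  exact sub_nonneg.mpr (one_le_pow₀ (le_add_of_nonneg_right (by positivity)))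

end Splitting

universe u in
theorem exists_isSplittingSet {E : Type*} [NormedAddCommGroup E] [InnerProductSpace ℝ E]
    (α : Type*) [Fintype α] {N : ℕ} (hN : 0 < N) (k : ℕ) :
    ∀ (ι : Type u) [Fintype ι], Fintype.card ι = 2 ^ k → ∀ w : ι × α → E, Orthonormal ℝ w →
      ∃ F : Finset (ι × α → E), F.card * (N + 1) ≤ (N + 1) ^ 2 ^ k ∧
        IsSplittingSet k (π / N) w F := by
  induction k with
  | zero => exact fun ι _ hι w hw => ⟨{w}, by simp, isSplittingSet_singleton hι _ hw⟩
  | succ k ih =>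
    intro ι _ hι w hw
    have e : ι ≃ Fin 2 × ULift.{u} (Fin (2 ^ k)) :=
      Fintype.equivOfCardEq (by simp [hι, pow_succ, mul_comm])
    rw [pow_succ, pow_mul]
    exact exists_isSplittingSet_succ e hN (ih _ (by simp)) hw

section Matrices

variable {ι α β : Type*} [Fintype α] [Fintype β]

def blockMatrices (v : ι × α → EuclideanSpace ℝ β) : ι → Matrix α β ℝ :=
  fun i => Matrix.of fun a t => v (i, a) t

lemma sqrt_sum_blockMatrices_mulVec_sq (v : ι × α → EuclideanSpace ℝ β) (i : ι) (x : β → ℝ) :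
    √(∑ a, (blockMatrices v i *ᵥ x) a ^ 2)
      = ‖innerCoeffs (fun a => v (i, a)) (WithLp.toLp 2 x)‖ := by
  simp [EuclideanSpace.norm_eq, innerCoeffs, blockMatrices, Matrix.mulVec, dotProduct,
    PiLp.inner_apply, mul_comm]

lemma innerCoeffs_single [DecidableEq β] (x : EuclideanSpace ℝ β) :
    innerCoeffs (fun t => EuclideanSpace.single t (1 : ℝ)) x = x := by
  ext t
  simp [innerCoeffs, EuclideanSpace.inner_single_left]

lemma isOrthDecomp_blockMatrices {d d' : ℕ}
    {v : Fin (d / d') × Fin d' → EuclideanSpace ℝ (Fin d)} (hv : Orthonormal ℝ v) :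
    IsOrthDecomp d d' (blockMatrices v) := by
  intro i a j b
  simpa [blockMatrices, PiLp.inner_apply, mul_comm] using orthonormal_iff_ite.mp hv (i, a) (j, b)

end Matrices

theorem exists_isOrthDecomp_splitting {d d' k N : ℕ} (hdvd : d' ∣ d) (hk : d / d' = 2 ^ k)
    (hN : 0 < N) :
    ∃ Ps : Finset (Fin (d / d') → Matrix (Fin d') (Fin d) ℝ),
      (∀ P ∈ Ps, IsOrthDecomp d d' P) ∧ Ps.card ≤ (N + 1) ^ 2 ^ k ∧
      ∀ x : Fin d → ℝ, √(∑ j, x j ^ 2) = 1 → ∃ P ∈ Ps, ∀ i,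
        |√((d : ℝ) / d') * √(∑ a, (P i *ᵥ x) a ^ 2) - 1| ≤ (1 + π / N) ^ k - 1 := by
  classical
  let σ : Fin (d / d') × Fin d' ≃ Fin d :=
    Fintype.equivOfCardEq (by simp [Nat.div_mul_cancel hdvd])
  let w : Fin (d / d') × Fin d' → EuclideanSpace ℝ (Fin d) :=
    fun p => EuclideanSpace.single (σ p) 1
  have hw : Orthonormal ℝ w := EuclideanSpace.orthonormal_single.comp σ σ.injective
  obtain ⟨F, hcard, hF, hsplit⟩ := exists_isSplittingSet (Fin d') hN k _ (by simp [hk]) w hw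
  refine ⟨F.image blockMatrices, fun P hP => ?_, ?_, fun x hx => ?_⟩
  · obtain ⟨v, hv, rfl⟩ := mem_image.mp hP
    exact isOrthDecomp_blockMatrices (hF v hv).1
  · exact card_image_le.trans ((Nat.le_mul_of_pos_right _ N.succ_pos).trans hcard)
  obtain ⟨v, hv, hvx⟩ := hsplit (WithLp.toLp 2 x)
  have hw_norm : ‖innerCoeffs w (WithLp.toLp 2 x)‖ = 1 := by
    refine (norm_innerCoeffs_comp_equiv (fun t => EuclideanSpace.single t (1 : ℝ)) σ _).trans ?_
    rw [innerCoeffs_single, EuclideanSpace.norm_eq, ← hx]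
    simp
  have hd' : (d' : ℝ) ≠ 0 := by
    rintro h
    simp only [Nat.cast_eq_zero.mp h, Nat.div_zero] at hk
    exact (pow_ne_zero k two_ne_zero) hk.symm
  have hdd' : √((d : ℝ) / d') = √2 ^ k := by
    rw [← Nat.cast_div hdvd hd', hk, Nat.cast_pow, Nat.cast_ofNat,
      ← Real.sqrt_sq (pow_nonneg (Real.sqrt_nonneg 2) k), ← pow_mul, mul_comm, pow_mul,
      Real.sq_sqrt zero_le_two]
  refine ⟨_, mem_image_of_mem _ hv, fun i => ?_⟩
  simpa [sqrt_sum_blockMatrices_mulVec_sq, hw_norm, hdd'] using hvx i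

lemma exists_div_eq_two_pow_lt {d d' : ℕ} (hd : ∃ a, d = 2 ^ a) (hd' : ∃ b, d' = 2 ^ b)
    (hdvd : d' ∣ d) : ∃ k, d / d' = 2 ^ k ∧ k < d := by
  obtain ⟨a, rfl⟩ := hd
  obtain ⟨b, rfl⟩ := hd'
  exact ⟨a - b, Nat.pow_div (Nat.pow_dvd_pow_iff_le_right'.mp hdvd) two_pos,
    (Nat.sub_le a b).trans_lt Nat.lt_two_pow_self⟩

lemma sixteen_le_and_one_le_mul_of_four_div_sq_le {ε x : ℝ} (hε : 0 < ε) (hε₂ : ε < 1 / 2)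
    (h : 4 / ε ^ 2 ≤ x) : 16 ≤ x ∧ 1 ≤ ε * x := by
  have h16 : 16 ≤ 4 / ε ^ 2 := by rw [le_div_iff₀ (by positivity)]; nlinarith
  have hinv : 1 / ε ≤ 4 / ε ^ 2 := by rw [div_le_div_iff₀ hε (by positivity)]; nlinarith
  rw [div_le_iff₀ hε] at hinv
  exact ⟨h16.trans h, by nlinarith⟩

lemma cube_add_one_pow_le_rpow {x : ℝ} (hx : 2 ≤ x) (m : ℕ) :
    (x ^ 3 + 1) ^ m ≤ x ^ (4 * (m : ℝ)) := by
  rw [show 4 * (m : ℝ) = (4 * m : ℕ) by push_cast; ring, Real.rpow_natCast, pow_mul]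
  gcongr
  nlinarith [pow_le_pow_left₀ zero_le_two hx 3]

lemma one_add_pi_div_cube_pow_sub_one_lt {ε n : ℝ} {k : ℕ} (hε : 0 < ε) (hε₁ : ε ≤ 1)
    (hn : 8 ≤ n) (hεn : 1 ≤ ε * n) (hk : k ≤ n) : (1 + π / n ^ 3) ^ k - 1 < ε := by
  refine one_add_pow_sub_one_lt hε hε₁ (by positivity) ?_
  rw [mul_div_assoc', div_le_div_iff₀ (by positivity) two_pos]
  calc k * π * 2 ≤ n * 4 * 2 := by gcongr; exact pi_lt_four.le
    _ ≤ n * n := by nlinarith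
    _ ≤ (ε * n) * (n * n) := le_mul_of_one_le_left (by positivity) hεn
    _ = ε * n ^ 3 := by ring

/-- There is a universal constant `K` such that for all `0 < ε < 1/2` and powers of two
`d' ∣ d` with `d' ≥ K/ε²`, there is a collection `Ps` of orthogonal decompositions of `ℝ^d`
into `ℝ^{d'}` with `|Ps| ≤ d^{K·d/d'}` such that every unit vector `x ∈ ℝ^d` is split by some
decomposition in `Ps` into components of nearly equal length:
`|√(d/d')·‖P_i x‖₂ − 1| < ε` for all `i`. -/
theorem exists_splitting_decompositions :
    ∃ K : ℝ, 0 < K ∧ ∀ ε : ℝ, 0 < ε → ε < 1 / 2 → ∀ d d' : ℕ,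
      (∃ a : ℕ, d = 2 ^ a) → (∃ b : ℕ, d' = 2 ^ b) → d' ∣ d → K / ε ^ 2 ≤ (d' : ℝ) →
      ∃ Ps : Finset (Fin (d / d') → Matrix (Fin d') (Fin d) ℝ),
        (∀ P ∈ Ps, IsOrthDecomp d d' P) ∧
        ((Ps.card : ℝ) ≤ (d : ℝ) ^ (K * (d : ℝ) / (d' : ℝ))) ∧
        ∀ x : Fin d → ℝ, Real.sqrt (∑ j, (x j) ^ 2) = 1 →
          ∃ P ∈ Ps, ∀ i : Fin (d / d'),
            |Real.sqrt ((d : ℝ) / (d' : ℝ)) *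
                Real.sqrt (∑ a, (Matrix.mulVec (P i) x a) ^ 2) - 1| < ε := by
  refine ⟨4, by norm_num, fun ε hε hε₂ d d' hd hd' hdvd hK => ?_⟩
  obtain ⟨k, hk, hkd⟩ := exists_div_eq_two_pow_lt hd hd' hdvd
  obtain ⟨h16, hεd'⟩ := sixteen_le_and_one_le_mul_of_four_div_sq_le hε hε₂ hK
  have hd'd : (d' : ℝ) ≤ d := by exact_mod_cast Nat.le_of_dvd (by omega) hdvd
  obtain ⟨Ps, hPs, hcard, hsplit⟩ :=
    exists_isOrthDecomp_splitting (N := d ^ 3) hdvd hk (pow_pos (by omega) 3)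
  refine ⟨Ps, hPs, ?_, fun x hx => ?_⟩
  · have hdd' : (d : ℝ) / d' = (2 ^ k : ℕ) := by rw [← hk, Nat.cast_div hdvd (by linarith)]
    rw [mul_div_assoc, hdd']
    have hcard' : (Ps.card : ℝ) ≤ ((d : ℝ) ^ 3 + 1) ^ 2 ^ k := by exact_mod_cast hcard
    exact hcard'.trans (cube_add_one_pow_le_rpow (by linarith) _)
  obtain ⟨P, hP, hPx⟩ := hsplit x hx
  push_cast at hPx
  exact ⟨P, hP, fun i => (hPx i).trans_lt (one_add_pi_div_cube_pow_sub_one_lt hε (by linarith)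
    (by linarith) (hεd'.trans (by gcongr)) (by exact_mod_cast hkd.le))⟩
end

section
/- Let d ≥ 1 be an integer, Δ > 0, and fix x ∈ ℝ^d. If an offset v is sampled uniformly from the cube [0, Δ]^d, then the expected number of lattice points u ∈ v + Δ·ℤ^d with ‖x − u‖_∞ ≤ (Δ + 2)/2 equals ((Δ + 2)/Δ)^d. In particular, for Δ = d this expectation is (1 + 2/d)^d ≤ e², i.e., each point of ℝ^d belongs on average to O(1) of the axis-aligned hypercubes of side length Δ + 2 centered at the points of the randomly shifted lattice v + Δ·ℤ^d. -/
/-!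
The lattice points counted are the `k` with `v + Δ k` in the box of side `Δ + 2` around `x`,
and both the box and the integration domain `[0, Δ]^d` are products, so by Fubini the integral
is the `d`-th power of its one-dimensional analogue. In dimension one, `[0, Δ]` is a fundamental
domain of `Δℤ`, so integrating the `Δℤ`-periodization of the indicator of an interval over it
returns the length `Δ + 2` of the interval. The bound `(1 + 2/d)^d ≤ e²` is `1 + t ≤ eᵗ`.
-/
open MeasureTheory Set
open scoped ENNReal

theorem Nat.card_setOf_forall_pi {ι : Type*} [Fintype ι] {α : ι → Type*}
    (p : ∀ i, α i → Prop) :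
    Nat.card {k : ∀ i, α i | ∀ i, p i (k i)} = ∏ i, Nat.card {a | p i a} :=
  (Nat.card_congr (Equiv.subtypePiEquivPi (p := p))).trans Nat.card_pi

theorem setIntegral_univ_pi_prod {ι 𝕜 : Type*} [Fintype ι] [RCLike 𝕜] {E : ι → Type*}
    [∀ i, MeasureSpace (E i)] [∀ i, SigmaFinite (volume : Measure (E i))]
    (s : ∀ i, Set (E i)) (f : ∀ i, E i → 𝕜) :
    ∫ x in univ.pi s, ∏ i, f i (x i) = ∏ i, ∫ x in s i, f i x := by
  rw [volume_pi, Measure.restrict_pi_pi, integral_fintype_prod_eq_prod]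

theorem lintegral_Ioc_tsum_add_zsmul {T : ℝ} (hT : 0 < T) (t : ℝ) {f : ℝ → ℝ≥0∞}
    (hf : Measurable f) :
    ∫⁻ x in Ioc t (t + T), ∑' n : ℤ, f (x + n • T) = ∫⁻ x, f x := by
  let e : ℤ ≃ AddSubgroup.zmultiples T :=
    Equiv.ofBijective (fun n ↦ ⟨n • T, n, rfl⟩)
      ⟨fun m n h ↦ (zsmul_left_strictMono hT).injective (congrArg Subtype.val h),
        fun ⟨_, n, hn⟩ ↦ ⟨n, Subtype.ext hn⟩⟩
  rw [lintegral_tsum fun n ↦ by fun_prop,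
    (isAddFundamentalDomain_Ioc hT t volume).lintegral_eq_tsum'' f, ← e.tsum_eq]
  simp [e, add_comm]

theorem natCast_card_eq_toReal_encard {α : Type*} (s : Set α) :
    (Nat.card s : ℝ) = (s.encard : ℝ≥0∞).toReal := by
  rcases s.finite_or_infinite with hs | hs
  · rw [← hs.cast_ncard_eq, Nat.card_coe_set_eq]; rfl
  · simp [hs.encard_eq, hs.ncard]

theorem setIntegral_Icc_card_abs_sub_le {Δ : ℝ} (hΔ : 0 < Δ) (c : ℝ) {L : ℝ} (hL : 0 ≤ L) :
    ∫ v in Icc 0 Δ, (Nat.card {n : ℤ | |c - (v + Δ * n)| ≤ L} : ℝ) = 2 * L := by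
  set F : ℝ → ℝ≥0∞ := fun v ↦ ∑' n : ℤ, (Icc (c - L) (c + L)).indicator 1 (v + n • Δ)
  have hF : ∀ v, F v = {n : ℤ | |c - (v + Δ * n)| ≤ L}.encard := by
    intro v
    rw [← ENNReal.tsum_set_one, tsum_subtype _ fun _ ↦ (1 : ℝ≥0∞)]
    congr! 2 with n
    simp only [indicator, mem_Icc, mem_ofPred_eq, abs_le, zsmul_eq_mul]
    congr! 1
    constructor <;> rintro ⟨h₁, h₂⟩ <;> constructor <;> linarith
  have hF_meas : Measurable F := .tsum fun n ↦
    (measurable_one.indicator measurableSet_Icc).comp (measurable_add_const _)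
  have hF_lintegral : ∫⁻ v in Ioc 0 Δ, F v = ENNReal.ofReal (2 * L) := by
    have := lintegral_Ioc_tsum_add_zsmul hΔ 0 (f := (Icc (c - L) (c + L)).indicator 1)
      (measurable_one.indicator measurableSet_Icc)
    rw [zero_add] at this
    rw [this, lintegral_indicator_one measurableSet_Icc, Real.volume_Icc]
    ring_nf
  calc ∫ v in Icc 0 Δ, (Nat.card {n : ℤ | |c - (v + Δ * n)| ≤ L} : ℝ)
      = ∫ v in Ioc 0 Δ, (F v).toReal := by
        rw [integral_Icc_eq_integral_Ioc]
        simp_rw [natCast_card_eq_toReal_encard, hF]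
    _ = (∫⁻ v in Ioc 0 Δ, F v).toReal :=
        integral_toReal hF_meas.aemeasurable
          (ae_lt_top hF_meas (hF_lintegral ▸ ENNReal.ofReal_ne_top))
    _ = 2 * L := by rw [hF_lintegral, ENNReal.toReal_ofReal (by positivity)]

theorem expected_hypercube_membership_general (d : ℕ) (Δ : ℝ) (hΔ : 0 < Δ)
    (x : Fin d → ℝ) :
    (∫ v in {v : Fin d → ℝ | ∀ i, v i ∈ Set.Icc (0 : ℝ) Δ},
        (Nat.card {k : Fin d → ℤ |
          ∀ i, |x i - (v i + Δ * (k i))| ≤ (Δ + 2) / 2} : ℝ) ∂volume) / Δ ^ d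
      = ((Δ + 2) / Δ) ^ d ∧
    (Δ = (d : ℝ) →
      ((Δ + 2) / Δ) ^ d = (1 + 2 / (d : ℝ)) ^ d ∧
      (1 + 2 / (d : ℝ)) ^ d ≤ Real.exp 2) := by
  refine ⟨?_, fun hΔd ↦ ⟨?_, ?_⟩⟩
  · have hbox : {v : Fin d → ℝ | ∀ i, v i ∈ Icc 0 Δ} = univ.pi fun _ ↦ Icc 0 Δ := by
      ext; simp only [mem_ofPred_eq, mem_univ_pi]
    set N : ℝ → ℝ → ℝ := fun c w ↦ Nat.card {n : ℤ | |c - (w + Δ * n)| ≤ (Δ + 2) / 2}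
    have hcount : ∀ v : Fin d → ℝ,
        (Nat.card {k : Fin d → ℤ | ∀ i, |x i - (v i + Δ * k i)| ≤ (Δ + 2) / 2} : ℝ) =
          ∏ i, N (x i) (v i) := fun v ↦ by
      rw [Nat.card_setOf_forall_pi fun i (n : ℤ) ↦ |x i - (v i + Δ * n)| ≤ (Δ + 2) / 2,
        Nat.cast_prod]
    simp_rw [hbox, hcount, setIntegral_univ_pi_prod, N,
      setIntegral_Icc_card_abs_sub_le hΔ _ (by positivity : (0 : ℝ) ≤ (Δ + 2) / 2)]
    rw [Finset.prod_const, Finset.card_univ, Fintype.card_fin, mul_div_cancel₀ _ two_ne_zero,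
      div_pow]
  · rw [add_div, div_self hΔ.ne', hΔd]
  · simpa [sub_eq_add_neg, neg_div] using
      Real.one_sub_div_pow_le_exp_neg (n := d) (t := -2) (by linarith [d.cast_nonneg (α := ℝ)])

/-- For a uniform offset `v ∈ [0, Δ]^d`, the expected number of lattice points
`u ∈ v + Δ·ℤ^d` with `‖x − u‖_∞ ≤ (Δ+2)/2` equals `((Δ+2)/Δ)^d`.  In particular, for `Δ = d`
this expectation is `(1 + 2/d)^d ≤ e²`: each point of `ℝ^d` belongs on average to `O(1)` of
the axis-aligned hypercubes of side length `Δ + 2` centered at the points of the randomly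
shifted lattice `v + Δ·ℤ^d`. -/
theorem expected_hypercube_membership (d : ℕ) (hd : 1 ≤ d) (Δ : ℝ) (hΔ : 0 < Δ)
    (x : Fin d → ℝ) :
    (∫ v in {v : Fin d → ℝ | ∀ i, v i ∈ Set.Icc (0 : ℝ) Δ},
        (Nat.card {k : Fin d → ℤ |
          ∀ i, |x i - (v i + Δ * (k i))| ≤ (Δ + 2) / 2} : ℝ) ∂volume) / Δ ^ d
      = ((Δ + 2) / Δ) ^ d ∧
    (Δ = (d : ℝ) →
      ((Δ + 2) / Δ) ^ d = (1 + 2 / (d : ℝ)) ^ d ∧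
      (1 + 2 / (d : ℝ)) ^ d ≤ Real.exp 2) :=
  expected_hypercube_membership_general d Δ hΔ x
end
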